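/- arXiv:1802.05754 — 7 statements merged into one kernel-verified Lean document; each statement's English description precedes it below -/
import Mathlib

section
/- Let $(\Omega, \mathcal{F}, \mathbb{P})$ be a probability space, let $Y$ and $\alpha$ be integrable real-valued random variables, and let $b_2, \bar b_2, r, \bar r, \bar s$ be real constants with $r + \bar r \neq 0$ and $r + \bar r(\bar s - 1)^2 \neq 0$. If $b_2 Y + \bar b_2\,\mathbb{E}[Y] + (r + \bar r)\alpha + \bar r \bar s(\bar s - 2)\,\mathbb{E}[\alpha] = 0$ holds $\mathbb{P}$-almost surely, then $\mathbb{P}$-almost surely $\alpha = a\,Y + b\,\mathbb{E}[Y]$, where $a = -\frac{b_2}{r + \bar r}$ and $b = -\frac{1}{r + \bar r}\Bigl( \bar b_2 - \frac{\bar r \bar s (\bar s - 2)(b_2 + \bar b_2)}{r + \bar r(\bar s - 1)^2} \Bigr)$. -/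
open MeasureTheory

/-- Closed form for the optimal control in the LQ extended mean field
control problem: if `b₂ Y + b̄₂ E[Y] + (r + r̄) α + r̄ s̄ (s̄ - 2) E[α] = 0` almost surely,
then almost surely `α = a Y + b E[Y]` with
`a = -b₂/(r + r̄)` and `b = -(b̄₂ - r̄ s̄ (s̄-2)(b₂ + b̄₂)/(r + r̄ (s̄-1)²))/(r + r̄)`. -/
theorem stmt_6 (Ω : Type*) [MeasurableSpace Ω] (P : Measure Ω) [IsProbabilityMeasure P]
    (Y α : Ω → ℝ) (hY : Integrable Y P) (hα : Integrable α P)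
    (b2 bb2 r rb sb : ℝ) (hr : r + rb ≠ 0) (hne : r + rb * (sb - 1) ^ 2 ≠ 0)
    (heq : ∀ᵐ ω ∂P,
      b2 * Y ω + bb2 * (∫ x, Y x ∂P) + (r + rb) * α ω
        + rb * sb * (sb - 2) * (∫ x, α x ∂P) = 0) :
    ∀ᵐ ω ∂P, α ω =
      (-(b2 / (r + rb))) * Y ω +
      (-(1 / (r + rb)) * (bb2 - rb * sb * (sb - 2) * (b2 + bb2)
          / (r + rb * (sb - 1) ^ 2))) * ∫ x, Y x ∂P := by
  set EY := ∫ x, Y x ∂P with hEY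
  set EA := ∫ x, α x ∂P with hEA
  have hint : Integrable (fun ω => b2 * Y ω + bb2 * EY + (r + rb) * α ω
      + rb * sb * (sb - 2) * EA) P := by
    exact (((hY.const_mul b2).add (integrable_const _)).add (hα.const_mul (r + rb))).add
      (integrable_const _)
  have hzero : ∫ ω, (b2 * Y ω + bb2 * EY + (r + rb) * α ω
      + rb * sb * (sb - 2) * EA) ∂P = 0 := by
    rw [integral_congr_ae (g := fun _ => (0:ℝ)) heq]
    simp
  have hval : ∫ ω, (b2 * Y ω + bb2 * EY + (r + rb) * α ω
      + rb * sb * (sb - 2) * EA) ∂P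
      = b2 * EY + bb2 * EY + (r + rb) * EA + rb * sb * (sb - 2) * EA := by
    have hfun : (fun ω => b2 * Y ω + bb2 * EY + (r + rb) * α ω + rb * sb * (sb - 2) * EA)
        = fun ω => (b2 * Y ω + (r + rb) * α ω) + (bb2 * EY + rb * sb * (sb - 2) * EA) := by
      funext ω; ring
    rw [hfun, integral_add (f := fun ω => b2 * Y ω + (r + rb) * α ω)
        (g := fun _ => bb2 * EY + rb * sb * (sb - 2) * EA)
        ((hY.const_mul b2).add (hα.const_mul (r + rb))) (integrable_const _),
      integral_add (f := fun ω => b2 * Y ω) (g := fun ω => (r + rb) * α ω)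
        (hY.const_mul b2) (hα.const_mul (r + rb)),
      integral_const_mul, integral_const_mul, integral_const]
    simp [hEY, hEA]
    ring
  have hmean : (r + rb * (sb - 1) ^ 2) * EA = -(b2 + bb2) * EY := by
    have := hval.symm.trans hzero
    nlinarith [this]
  have hEAval : EA = -(b2 + bb2) * EY / (r + rb * (sb - 1) ^ 2) := by
    field_simp
    linarith [hmean]
  filter_upwards [heq] with ω h
  have hαω : α ω = (-(b2 * Y ω + bb2 * EY + rb * sb * (sb - 2) * EA)) / (r + rb) := by
    field_simp
    linarith [h]
  rw [hαω, hEAval]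
  field_simp
  ring
end

section
/- Let $\phi > 0$, $k > 0$, $\lambda, A \in \mathbb{R}$, $T > 0$, and set $r = \sqrt{\phi/k}$, $d_1 = \sqrt{\phi k} - A$, $d_2 = \sqrt{\phi k} + A$, $c_1 = 2d_1 + \lambda$, $c_2 = 2d_2 - \lambda$. Assume $d_1 e^{-rT} + d_2 e^{rT} \neq 0$ and $c_1 e^{-rT} + c_2 e^{rT} \neq 0$. Let $F, G : [0,T] \to \mathbb{R}$ be twice differentiable with $F'' = r^2 F$ and $G'' = r^2 G$ on $[0,T]$, $F(0) = q_0$, $G(0) = \bar q_0$, and suppose the terminal conditions $2k\,F'(T) = \lambda\,G(T) - 2A\,F(T)$ and $2k\,G'(T) = (\lambda - 2A)\,G(T)$ hold. Then $F'(0) = q_0\, r\, \frac{d_1 e^{-rT} - d_2 e^{rT}}{d_1 e^{-rT} + d_2 e^{rT}} + \frac{4 \lambda \phi\, \bar q_0}{(d_1 e^{-rT} + d_2 e^{rT})(c_1 e^{-rT} + c_2 e^{rT})}$. -/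
open Set Real

lemma const_inv (T s : ℝ) (hT : 0 < T) (f f' : ℝ → ℝ)
    (hf : ∀ t ∈ Icc (0 : ℝ) T, HasDerivWithinAt f (f' t) (Icc (0 : ℝ) T) t)
    (hf' : ∀ t ∈ Icc (0 : ℝ) T, HasDerivWithinAt f' (s ^ 2 * f t) (Icc (0 : ℝ) T) t) :
    f' 0 + s * f 0 = (f' T + s * f T) * Real.exp (-(s * T)) := by
  set H : ℝ → ℝ := fun t => (f' t + s * f t) * Real.exp (-(s * t)) with hH
  have hderiv : ∀ t ∈ Icc (0 : ℝ) T, HasDerivWithinAt H 0 (Icc (0 : ℝ) T) t := by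
    intro t ht
    have he : HasDerivAt (fun t : ℝ => Real.exp (-(s * t))) (-s * Real.exp (-(s * t))) t := by
      have h1 : HasDerivAt (fun t : ℝ => -(s * t)) (-s) t := by
        have h0 := ((hasDerivAt_id t).const_mul s).neg
        simp only [mul_one] at h0
        exact h0
      simpa [mul_comm] using h1.exp
    have h2 := ((hf' t ht).add ((hf t ht).const_mul s)).mul he.hasDerivWithinAt
    have h3 := h2.congr_deriv (g' := 0) (by simp only [Pi.add_apply]; ring)
    exact h3
  have hcont : ContinuousOn H (Icc 0 T) := fun t ht => (hderiv t ht).continuousWithinAt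
  have hkey := constant_of_has_deriv_right_zero hcont (f := H) (fun x hx => by
    refine (hderiv x (Ico_subset_Icc_self hx)).mono_of_mem_nhdsWithin ?_
    refine mem_nhdsWithin.mpr ⟨Iio T, isOpen_Iio, hx.2, fun y hy => ⟨le_trans hx.1 hy.2, le_of_lt hy.1⟩⟩)
  have := hkey T (right_mem_Icc.mpr hT.le)
  simp only [hH] at this
  rw [this]
  norm_num

/-- Closed form for the initial trading speed `α₀ = F'(0)` in the optimal
liquidation problem with market impact, where the (conditional) inventory `F` and the mean
inventory `G` solve `F'' = r² F`, `G'' = r² G` on `[0,T]` with `F 0 = q₀`, `G 0 = q̄₀` and the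
terminal conditions `2k F'(T) = λ G(T) - 2A F(T)`, `2k G'(T) = (λ - 2A) G(T)`. -/
theorem stmt_8 (φ k lam A T q0 qbar0 : ℝ) (hφ : 0 < φ) (hk : 0 < k) (hT : 0 < T)
    (r d1 d2 c1 c2 : ℝ)
    (hr : r = Real.sqrt (φ / k))
    (hd1 : d1 = Real.sqrt (φ * k) - A) (hd2 : d2 = Real.sqrt (φ * k) + A)
    (hc1 : c1 = 2 * d1 + lam) (hc2 : c2 = 2 * d2 - lam)
    (hden1 : d1 * exp (-(r * T)) + d2 * exp (r * T) ≠ 0)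
    (hden2 : c1 * exp (-(r * T)) + c2 * exp (r * T) ≠ 0)
    (F F' G G' : ℝ → ℝ)
    (hF : ∀ t ∈ Icc (0 : ℝ) T, HasDerivWithinAt F (F' t) (Icc (0 : ℝ) T) t)
    (hF' : ∀ t ∈ Icc (0 : ℝ) T, HasDerivWithinAt F' (r ^ 2 * F t) (Icc (0 : ℝ) T) t)
    (hG : ∀ t ∈ Icc (0 : ℝ) T, HasDerivWithinAt G (G' t) (Icc (0 : ℝ) T) t)
    (hG' : ∀ t ∈ Icc (0 : ℝ) T, HasDerivWithinAt G' (r ^ 2 * G t) (Icc (0 : ℝ) T) t)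
    (hF0 : F 0 = q0) (hG0 : G 0 = qbar0)
    (hFT : 2 * k * F' T = lam * G T - 2 * A * F T)
    (hGT : 2 * k * G' T = (lam - 2 * A) * G T) :
    F' 0 = q0 * r * ((d1 * exp (-(r * T)) - d2 * exp (r * T))
        / (d1 * exp (-(r * T)) + d2 * exp (r * T)))
      + 4 * lam * φ * qbar0
        / ((d1 * exp (-(r * T)) + d2 * exp (r * T))
          * (c1 * exp (-(r * T)) + c2 * exp (r * T))) := by
  -- basic facts about r
  have hrpos : 0 < r := by
    rw [hr]; exact Real.sqrt_pos.mpr (div_pos hφ hk)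
  have hφeq : φ = k * r ^ 2 := by
    rw [hr, Real.sq_sqrt (le_of_lt (div_pos hφ hk))]
    field_simp
  have hkr : Real.sqrt (φ * k) = k * r := by
    rw [show φ * k = (k * r) ^ 2 by rw [hφeq]; ring]
    exact Real.sqrt_sq (by positivity)
  have hd1' : d1 = k * r - A := by rw [hd1, hkr]
  have hd2' : d2 = k * r + A := by rw [hd2, hkr]
  -- negative-sign second derivative hypotheses
  have hF'n : ∀ t ∈ Icc (0 : ℝ) T, HasDerivWithinAt F' ((-r) ^ 2 * F t) (Icc (0 : ℝ) T) t := by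
    intro t ht; simpa [neg_pow] using hF' t ht
  have hG'n : ∀ t ∈ Icc (0 : ℝ) T, HasDerivWithinAt G' ((-r) ^ 2 * G t) (Icc (0 : ℝ) T) t := by
    intro t ht; simpa [neg_pow] using hG' t ht
  have A1 := const_inv T r hT F F' hF hF'
  have A2 := const_inv T (-r) hT F F' hF hF'n
  have B1 := const_inv T r hT G G' hG hG'
  have B2 := const_inv T (-r) hT G G' hG hG'n
  rw [show -(-r * T) = r * T by ring] at A2 B2
  rw [hF0] at A1 A2; rw [hG0] at B1 B2
  set Em := Real.exp (-(r * T)) with hEm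
  set Ep := Real.exp (r * T) with hEp
  have hprod : Em * Ep = 1 := by rw [hEm, hEp, ← Real.exp_add]; norm_num
  -- value of G T
  have hGTval : G T * (c1 * Em + c2 * Ep) = 4 * k * r * qbar0 := by
    rw [hc1, hc2, hd1', hd2']
    linear_combination (2 * k) * B2 - (2 * k) * B1 - (Em - Ep) * hGT
  -- value of F T (times denominator)
  have hFTval : 2 * F T * (d1 * Em + d2 * Ep) = 4 * k * r * q0 - lam * G T * (Em - Ep) := by
    rw [hd1', hd2']
    linear_combination (2 * k) * A2 - (2 * k) * A1 - (Em - Ep) * hFT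
  -- value of F' 0
  have hF'0val : 4 * k * F' 0 = lam * G T * (Em + Ep) + 2 * F T * (d1 * Em - d2 * Ep) := by
    rw [hd1', hd2']
    linear_combination (2 * k) * A1 + (2 * k) * A2 + (Em + Ep) * hFT
  have hk4 : (4 : ℝ) * k ≠ 0 := by positivity
  have key4 : (4 * k) * (F' 0 * ((d1 * Em + d2 * Ep) * (c1 * Em + c2 * Ep)))
      = (4 * k) * (q0 * r * ((d1 * Em - d2 * Ep) * (c1 * Em + c2 * Ep))
        + 4 * lam * (k * r ^ 2) * qbar0) := by
    linear_combination ((d1 * Em + d2 * Ep) * (c1 * Em + c2 * Ep)) * hF'0val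
      + ((d1 * Em - d2 * Ep) * (c1 * Em + c2 * Ep)) * hFTval
      + (2 * (d1 + d2) * lam * G T * (c1 * Em + c2 * Ep)) * hprod
      + (4 * k * r * lam) * hGTval
      + (2 * lam * G T * (c1 * Em + c2 * Ep)) * hd1'
      + (2 * lam * G T * (c1 * Em + c2 * Ep)) * hd2'
  have key := mul_left_cancel₀ hk4 key4
  rw [hφeq]
  have hrw : q0 * r * ((d1 * Em - d2 * Ep) / (d1 * Em + d2 * Ep))
      + 4 * lam * (k * r ^ 2) * qbar0 / ((d1 * Em + d2 * Ep) * (c1 * Em + c2 * Ep))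
      = (q0 * r * ((d1 * Em - d2 * Ep) * (c1 * Em + c2 * Ep))
        + 4 * lam * (k * r ^ 2) * qbar0) / ((d1 * Em + d2 * Ep) * (c1 * Em + c2 * Ep)) := by
    rw [mul_div_assoc', div_add_div _ _ hden1 (mul_ne_zero hden1 hden2), div_eq_div_iff (mul_ne_zero hden1 (mul_ne_zero hden1 hden2)) (mul_ne_zero hden1 hden2)]
    ring
  rw [hrw, eq_div_iff (mul_ne_zero hden1 hden2)]
  linear_combination key
end

section
/- Let $\phi > 0$, $k > 0$, $\lambda, A \in \mathbb{R}$, $T > 0$, and set $r = \sqrt{\phi/k}$, $d_1 = \sqrt{\phi k} - A$, $d_2 = \sqrt{\phi k} + A$, $c_1 = 2d_1 + \lambda$, $c_2 = 2d_2 - \lambda$. Assume $d_1 e^{-rT} + d_2 e^{rT} \neq 0$ and $c_1 e^{-rT} + c_2 e^{rT} \neq 0$. Let $F, G : [0,T] \to \mathbb{R}$ be twice differentiable with $F'' = r^2 F$ and $G'' = r^2 G$ on $[0,T]$, $F(0) = q_0$, $G(0) = \bar q_0$, and suppose the terminal conditions $2k\,F'(T) = \lambda\,G(T) - 2A\,F(T)$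 and $2k\,G'(T) = (\lambda - 2A)\,G(T)$ hold. Then for all $t \in [0,T]$: $F(t) = q_0\, \frac{d_1 e^{-r(T-t)} + d_2 e^{r(T-t)}}{d_1 e^{-rT} + d_2 e^{rT}} + \bar q_0\, \frac{2 \lambda \sqrt{\phi k}\,(e^{rt} - e^{-rt})}{(d_1 e^{-rT} + d_2 e^{rT})(c_1 e^{-rT} + c_2 e^{rT})}$ and $F'(t) = q_0\, r\, \frac{d_1 e^{-r(T-t)} - d_2 e^{r(T-t)}}{d_1 e^{-rT} + d_2 e^{rT}} + \bar q_0\, \frac{2 \lambda \phi\,(e^{rt} + e^{-rt})}{(d_1 e^{-rT} + d_2 e^{rT})(c_1 e^{-rT} + c_2 e^{rT})}$. -/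
open Set Real

lemma lin_ode (T r : ℝ) (hT : 0 < T) (F F' : ℝ → ℝ)
    (hF : ∀ t ∈ Icc (0 : ℝ) T, HasDerivWithinAt F (F' t) (Icc (0 : ℝ) T) t)
    (hF' : ∀ t ∈ Icc (0 : ℝ) T, HasDerivWithinAt F' (r ^ 2 * F t) (Icc (0 : ℝ) T) t) :
    ∀ t ∈ Icc (0 : ℝ) T,
      2 * r * F t = (F' 0 + r * F 0) * exp (r * t) - (F' 0 - r * F 0) * exp (-(r * t)) ∧
      2 * F' t = (F' 0 + r * F 0) * exp (r * t) + (F' 0 - r * F 0) * exp (-(r * t)) := by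
  have hderiv : ∀ (c : ℝ) (t : ℝ), HasDerivAt (fun y : ℝ => exp (c * y)) (c * exp (c * t)) t := by
    intro c t
    have h0 : HasDerivAt (fun y : ℝ => c * y) c t := by
      simpa using (hasDerivAt_id t).const_mul c
    simpa [mul_comm] using h0.exp
  have hu : ∀ t ∈ Icc (0 : ℝ) T,
      HasDerivWithinAt (fun y => exp (-r * y) * (F' y + r * F y)) 0 (Icc (0 : ℝ) T) t := by
    intro t ht
    have h1 := (hderiv (-r) t).hasDerivWithinAt (s := Icc (0 : ℝ) T)
    have h2 : HasDerivWithinAt (fun y => F' y + r * F y) (r ^ 2 * F t + r * F' t)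
        (Icc (0 : ℝ) T) t := (hF' t ht).add ((hF t ht).const_mul r)
    have : HasDerivWithinAt (fun y => exp (-r * y) * (F' y + r * F y))
        (-r * exp (-r * t) * (F' t + r * F t) + exp (-r * t) * (r ^ 2 * F t + r * F' t))
        (Icc (0 : ℝ) T) t := h1.mul h2
    convert this using 1
    ring
  have hv : ∀ t ∈ Icc (0 : ℝ) T,
      HasDerivWithinAt (fun y => exp (r * y) * (F' y - r * F y)) 0 (Icc (0 : ℝ) T) t := by
    intro t ht
    have h1 := (hderiv r t).hasDerivWithinAt (s := Icc (0 : ℝ) T)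
    have h2 : HasDerivWithinAt (fun y => F' y - r * F y) (r ^ 2 * F t - r * F' t)
        (Icc (0 : ℝ) T) t := (hF' t ht).sub ((hF t ht).const_mul r)
    have : HasDerivWithinAt (fun y => exp (r * y) * (F' y - r * F y))
        (r * exp (r * t) * (F' t - r * F t) + exp (r * t) * (r ^ 2 * F t - r * F' t))
        (Icc (0 : ℝ) T) t := h1.mul h2
    convert this using 1
    ring
  have hucst := constant_of_derivWithin_zero (f := fun y => exp (-r * y) * (F' y + r * F y))
    (a := 0) (b := T) (fun x hx => (hu x hx).differentiableWithinAt)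
    (fun x hx => (hu x (Ico_subset_Icc_self hx)).derivWithin
      (uniqueDiffOn_Icc hT x (Ico_subset_Icc_self hx)))
  have hvcst := constant_of_derivWithin_zero (f := fun y => exp (r * y) * (F' y - r * F y))
    (a := 0) (b := T) (fun x hx => (hv x hx).differentiableWithinAt)
    (fun x hx => (hv x (Ico_subset_Icc_self hx)).derivWithin
      (uniqueDiffOn_Icc hT x (Ico_subset_Icc_self hx)))
  intro t ht
  have eu : exp (-r * t) * (F' t + r * F t) = F' 0 + r * F 0 := by
    have := hucst t ht; simpa using this
  have ev : exp (r * t) * (F' t - r * F t) = F' 0 - r * F 0 := by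
    have := hvcst t ht; simpa using this
  have hmul : exp (r * t) * exp (-(r * t)) = 1 := by
    rw [← Real.exp_add]; simp
  have hne : exp (-r * t) = exp (-(r * t)) := by ring_nf
  rw [hne] at eu
  have h1 : F' t + r * F t = (F' 0 + r * F 0) * exp (r * t) := by
    linear_combination exp (r * t) * eu - (F' t + r * F t) * hmul
  have h2 : F' t - r * F t = (F' 0 - r * F 0) * exp (-(r * t)) := by
    linear_combination exp (-(r * t)) * ev - (F' t - r * F t) * hmul
  constructor
  · linear_combination h1 - h2
  · linear_combination h1 + h2

/-- Closed form for the optimal inventory `Q_t = F(t)` and trading speed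
`α_t = F'(t)` in the optimal liquidation problem with market impact, where the (conditional)
inventory `F` and the mean inventory `G` solve `F'' = r² F`, `G'' = r² G` on `[0,T]` with
`F 0 = q₀`, `G 0 = q̄₀` and the terminal conditions `2k F'(T) = λ G(T) - 2A F(T)`,
`2k G'(T) = (λ - 2A) G(T)`. -/
theorem stmt_9 (φ k lam A T q0 qbar0 : ℝ) (hφ : 0 < φ) (hk : 0 < k) (hT : 0 < T)
    (r d1 d2 c1 c2 : ℝ)
    (hr : r = Real.sqrt (φ / k))
    (hd1 : d1 = Real.sqrt (φ * k) - A) (hd2 : d2 = Real.sqrt (φ * k) + A)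
    (hc1 : c1 = 2 * d1 + lam) (hc2 : c2 = 2 * d2 - lam)
    (hden1 : d1 * exp (-(r * T)) + d2 * exp (r * T) ≠ 0)
    (hden2 : c1 * exp (-(r * T)) + c2 * exp (r * T) ≠ 0)
    (F F' G G' : ℝ → ℝ)
    (hF : ∀ t ∈ Icc (0 : ℝ) T, HasDerivWithinAt F (F' t) (Icc (0 : ℝ) T) t)
    (hF' : ∀ t ∈ Icc (0 : ℝ) T, HasDerivWithinAt F' (r ^ 2 * F t) (Icc (0 : ℝ) T) t)
    (hG : ∀ t ∈ Icc (0 : ℝ) T, HasDerivWithinAt G (G' t) (Icc (0 : ℝ) T) t)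
    (hG' : ∀ t ∈ Icc (0 : ℝ) T, HasDerivWithinAt G' (r ^ 2 * G t) (Icc (0 : ℝ) T) t)
    (hF0 : F 0 = q0) (hG0 : G 0 = qbar0)
    (hFT : 2 * k * F' T = lam * G T - 2 * A * F T)
    (hGT : 2 * k * G' T = (lam - 2 * A) * G T) :
    ∀ t ∈ Icc (0 : ℝ) T,
      F t = q0 * ((d1 * exp (-(r * (T - t))) + d2 * exp (r * (T - t)))
          / (d1 * exp (-(r * T)) + d2 * exp (r * T)))
        + qbar0 * (2 * lam * Real.sqrt (φ * k) * (exp (r * t) - exp (-(r * t)))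
          / ((d1 * exp (-(r * T)) + d2 * exp (r * T))
            * (c1 * exp (-(r * T)) + c2 * exp (r * T)))) ∧
      F' t = q0 * r * ((d1 * exp (-(r * (T - t))) - d2 * exp (r * (T - t)))
          / (d1 * exp (-(r * T)) + d2 * exp (r * T)))
        + qbar0 * (2 * lam * φ * (exp (r * t) + exp (-(r * t)))
          / ((d1 * exp (-(r * T)) + d2 * exp (r * T))
            * (c1 * exp (-(r * T)) + c2 * exp (r * T)))) := by
  subst hc1; subst hc2; subst hd1; subst hd2
  have hφk : 0 < φ / k := div_pos hφ hk
  have hrpos : 0 < r := by rw [hr]; exact Real.sqrt_pos.mpr hφk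
  have hrne : r ≠ 0 := ne_of_gt hrpos
  have hsk : Real.sqrt (φ * k) = k * r := by
    have h1 : φ * k = (φ / k) * k ^ 2 := by field_simp
    rw [h1, Real.sqrt_mul (le_of_lt hφk), Real.sqrt_sq hk.le, hr]; ring
  have hφr : φ = k * r ^ 2 := by
    have : r ^ 2 = φ / k := by rw [hr]; exact Real.sq_sqrt hφk.le
    rw [this]; field_simp
  rw [hsk] at hden1 hden2
  have keyF := lin_ode T r hT F F' hF hF'
  have keyG := lin_ode T r hT G G' hG hG'
  have hTmem : T ∈ Icc (0 : ℝ) T := ⟨hT.le, le_refl T⟩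
  have hEEi : exp (r * T) * exp (-(r * T)) = 1 := by rw [← Real.exp_add]; simp
  obtain ⟨hAg, hBg⟩ := keyG T hTmem
  rw [hG0] at hAg hBg
  obtain ⟨hAf, hBf⟩ := keyF T hTmem
  rw [hF0] at hAf hBf
  -- pin down G' 0
  have hg : G' 0 * ((2 * (k * r - A) + lam) * exp (-(r * T)) + (2 * (k * r + A) - lam) * exp (r * T))
      = r * qbar0 * ((2 * (k * r - A) + lam) * exp (-(r * T)) - (2 * (k * r + A) - lam) * exp (r * T)) := by
    linear_combination 2 * r * hGT - 2 * k * r * hBg + (lam - 2 * A) * hAg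
  -- value of G T
  have hGTv : 2 * r * G T * ((2 * (k * r - A) + lam) * exp (-(r * T)) + (2 * (k * r + A) - lam) * exp (r * T))
      = 8 * k * r ^ 2 * qbar0 := by
    linear_combination ((2 * (k * r - A) + lam) * exp (-(r * T)) + (2 * (k * r + A) - lam) * exp (r * T)) * hAg
      + (exp (r * T) - exp (-(r * T))) * hg + 8 * k * r ^ 2 * qbar0 * hEEi
  -- pin down F' 0
  have hp : F' 0 * (((k * r - A) * exp (-(r * T)) + (k * r + A) * exp (r * T))
        * ((2 * (k * r - A) + lam) * exp (-(r * T)) + (2 * (k * r + A) - lam) * exp (r * T)))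
      = 4 * lam * k * r ^ 2 * qbar0
        - r * q0 * ((k * r + A) * exp (r * T) - (k * r - A) * exp (-(r * T)))
          * ((2 * (k * r - A) + lam) * exp (-(r * T)) + (2 * (k * r + A) - lam) * exp (r * T)) := by
    linear_combination ((2 * (k * r - A) + lam) * exp (-(r * T)) + (2 * (k * r + A) - lam) * exp (r * T))
        * (r * hFT - k * r * hBf - A * hAf) + (lam / 2) * hGTv
  intro t ht
  obtain ⟨hAt, hBt⟩ := keyF t ht
  rw [hF0] at hAt hBt
  have he1 : exp (-(r * (T - t))) = exp (-(r * T)) * exp (r * t) := by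
    rw [← Real.exp_add]; congr 1; ring
  have he2 : exp (r * (T - t)) = exp (r * T) * exp (-(r * t)) := by
    rw [← Real.exp_add]; congr 1; ring
  have heei : exp (r * t) * exp (-(r * t)) = 1 := by rw [← Real.exp_add]; simp
  rw [hsk, hφr, he1, he2]
  have hFt : F t = ((F' 0 + r * q0) * exp (r * t) - (F' 0 - r * q0) * exp (-(r * t))) / (2 * r) := by
    rw [eq_div_iff (by positivity)]
    linear_combination hAt
  have hF't : F' t = ((F' 0 + r * q0) * exp (r * t) + (F' 0 - r * q0) * exp (-(r * t))) / 2 := by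
    rw [eq_div_iff (by norm_num : (2:ℝ) ≠ 0)]
    linear_combination hBt
  have h2r : (2 * r : ℝ) ≠ 0 := by positivity
  constructor
  · have hsplit : q0 * (((k * r - A) * (exp (-(r * T)) * exp (r * t)) + (k * r + A) * (exp (r * T) * exp (-(r * t))))
          / ((k * r - A) * exp (-(r * T)) + (k * r + A) * exp (r * T)))
        + qbar0 * (2 * lam * (k * r) * (exp (r * t) - exp (-(r * t)))
          / (((k * r - A) * exp (-(r * T)) + (k * r + A) * exp (r * T))
            * ((2 * (k * r - A) + lam) * exp (-(r * T)) + (2 * (k * r + A) - lam) * exp (r * T))))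
        = (q0 * ((k * r - A) * (exp (-(r * T)) * exp (r * t)) + (k * r + A) * (exp (r * T) * exp (-(r * t))))
            * ((2 * (k * r - A) + lam) * exp (-(r * T)) + (2 * (k * r + A) - lam) * exp (r * T))
          + qbar0 * (2 * lam * (k * r) * (exp (r * t) - exp (-(r * t)))))
          / (((k * r - A) * exp (-(r * T)) + (k * r + A) * exp (r * T))
            * ((2 * (k * r - A) + lam) * exp (-(r * T)) + (2 * (k * r + A) - lam) * exp (r * T))) := by
      rw [mul_div_assoc', mul_div_assoc', div_add_div _ _ hden1 (mul_ne_zero hden1 hden2),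
        div_eq_div_iff (mul_ne_zero hden1 (mul_ne_zero hden1 hden2)) (mul_ne_zero hden1 hden2)]
      ring
    rw [hsplit, eq_div_iff (mul_ne_zero hden1 hden2)]
    apply mul_left_cancel₀ h2r
    linear_combination (((k * r - A) * exp (-(r * T)) + (k * r + A) * exp (r * T))
        * ((2 * (k * r - A) + lam) * exp (-(r * T)) + (2 * (k * r + A) - lam) * exp (r * T))) * hAt
      + (exp (r * t) - exp (-(r * t))) * hp
  · have hsplit : q0 * r * (((k * r - A) * (exp (-(r * T)) * exp (r * t)) - (k * r + A) * (exp (r * T) * exp (-(r * t))))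
          / ((k * r - A) * exp (-(r * T)) + (k * r + A) * exp (r * T)))
        + qbar0 * (2 * lam * (k * r ^ 2) * (exp (r * t) + exp (-(r * t)))
          / (((k * r - A) * exp (-(r * T)) + (k * r + A) * exp (r * T))
            * ((2 * (k * r - A) + lam) * exp (-(r * T)) + (2 * (k * r + A) - lam) * exp (r * T))))
        = (q0 * r * ((k * r - A) * (exp (-(r * T)) * exp (r * t)) - (k * r + A) * (exp (r * T) * exp (-(r * t))))
            * ((2 * (k * r - A) + lam) * exp (-(r * T)) + (2 * (k * r + A) - lam) * exp (r * T))
          + qbar0 * (2 * lam * (k * r ^ 2) * (exp (r * t) + exp (-(r * t)))))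
          / (((k * r - A) * exp (-(r * T)) + (k * r + A) * exp (r * T))
            * ((2 * (k * r - A) + lam) * exp (-(r * T)) + (2 * (k * r + A) - lam) * exp (r * T))) := by
      rw [mul_div_assoc', mul_div_assoc', div_add_div _ _ hden1 (mul_ne_zero hden1 hden2),
        div_eq_div_iff (mul_ne_zero hden1 (mul_ne_zero hden1 hden2)) (mul_ne_zero hden1 hden2)]
      ring
    rw [hsplit, eq_div_iff (mul_ne_zero hden1 hden2)]
    apply mul_left_cancel₀ (two_ne_zero (α := ℝ))
    linear_combination (((k * r - A) * exp (-(r * T)) + (k * r + A) * exp (r * T))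
        * ((2 * (k * r - A) + lam) * exp (-(r * T)) + (2 * (k * r + A) - lam) * exp (r * T))) * hBt
      + (exp (r * t) + exp (-(r * t))) * hp
end

section
/- Let $(\Omega, \mathcal{F}, \mathbb{P})$ be a probability space and $\beta : [0,1] \times \Omega \to \mathbb{R}^d$ jointly measurable with $\int_\Omega \int_0^1 |\beta_t(\omega)|\, dt\, \mathbb{P}(d\omega) < \infty$. For $n \in \mathbb{N}$ and $t \in [0,1)$ define $A_n(t) := 2^n \int_{\lfloor t 2^n \rfloor 2^{-n}}^{(\lfloor t 2^n \rfloor + 1) 2^{-n}} \beta_s\, ds$ (an $\mathbb{R}^d$-valued random variable). Then for Lebesgue-almost every $t \in [0,1]$, the laws $\mathcal{L}(A_n(t))$ converge weakly to $\mathcal{L}(\beta_t)$ as $n \to \infty$. -/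
open MeasureTheory Filter Topology

set_option maxHeartbeats 4000000 in
/-- Dyadic Lebesgue differentiation in law: if `β : [0,1] × Ω → ℝ^d` is
jointly measurable and integrable, and `Aₙ(t)` denotes the average of `β` over the dyadic
interval of generation `n` containing `t`, then for Lebesgue-a.e. `t ∈ [0,1]` the laws
`ℒ(Aₙ(t))` converge weakly to `ℒ(β_t)` as `n → ∞`. -/
theorem stmt_12 (d : ℕ)
    (Ω : Type) [MeasurableSpace Ω] (P : Measure Ω) [IsProbabilityMeasure P]
    (β : ℝ → Ω → (Fin d → ℝ))
    (hβmeas : Measurable (Function.uncurry β))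
    (hβint : Integrable (fun p : ℝ × Ω => β p.1 p.2)
      ((volume.restrict (Set.Icc (0 : ℝ) 1)).prod P))
    (Ln : ℕ → ℝ → ProbabilityMeasure (Fin d → ℝ))
    (hLn : ∀ n : ℕ, ∀ t : ℝ, (Ln n t : Measure (Fin d → ℝ)) =
      P.map (fun ω => (2 : ℝ) ^ n •
        ∫ s in Set.Icc ((⌊t * 2 ^ n⌋ : ℝ) / 2 ^ n) (((⌊t * 2 ^ n⌋ : ℝ) + 1) / 2 ^ n),
          β s ω))
    (L : ℝ → ProbabilityMeasure (Fin d → ℝ))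
    (hL : ∀ t : ℝ, (L t : Measure (Fin d → ℝ)) = P.map (β t)) :
    ∀ᵐ t ∂(volume.restrict (Set.Icc (0 : ℝ) 1)),
      Tendsto (fun n => Ln n t) atTop (𝓝 (L t)) := by
  set μ : Measure ℝ := volume.restrict (Set.Icc (0 : ℝ) 1) with hμ
  set A : ℕ → ℝ → Ω → (Fin d → ℝ) := fun n t ω => (2 : ℝ) ^ n •
      ∫ s in Set.Icc ((⌊t * 2 ^ n⌋ : ℝ) / 2 ^ n) (((⌊t * 2 ^ n⌋ : ℝ) + 1) / 2 ^ n), β s ω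
    with hA
  -- measurability of the averages, jointly in (ω, t)
  have hAmeas : ∀ n, Measurable (fun x : Ω × ℝ => A n x.2 x.1) := by
    intro n
    have hsm : StronglyMeasurable (fun p : Ω × ℝ => β p.2 p.1) :=
      (hβmeas.comp measurable_swap).stronglyMeasurable
    have hg : Measurable (fun x : Ω × ℤ =>
        ∫ s in Set.Icc ((x.2 : ℝ) / 2 ^ n) (((x.2 : ℝ) + 1) / 2 ^ n), β s x.1) := by
      apply measurable_from_prod_countable_left
      intro k
      exact (hsm.integral_prod_right' (ν := volume.restrict
        (Set.Icc ((k : ℝ) / 2 ^ n) (((k : ℝ) + 1) / 2 ^ n)))).measurable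
    have hfl : Measurable (fun x : Ω × ℝ => (x.1, ⌊x.2 * 2 ^ n⌋)) :=
      measurable_fst.prodMk ((measurable_snd.mul_const _).floor)
    exact (hg.comp hfl).const_smul ((2 : ℝ) ^ n)
  have hβmeas' : Measurable (fun x : Ω × ℝ => β x.2 x.1) := hβmeas.comp measurable_swap
  have hTmeas : MeasurableSet
      {x : Ω × ℝ | Tendsto (fun n => A n x.2 x.1) atTop (𝓝 (β x.2 x.1))} :=
    measurableSet_tendsto_fun hAmeas hβmeas'
  -- for a.e. ω, a.e. t, pointwise convergence of dyadic averages
  have Hswap : ∀ᵐ ω ∂P, ∀ᵐ t ∂μ, Tendsto (fun n => A n t ω) atTop (𝓝 (β t ω)) := by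
    have hint : ∀ᵐ ω ∂P, Integrable (fun t => β t ω) μ := hβint.prod_left_ae
    filter_upwards [hint] with ω hω
    set f : ℝ → (Fin d → ℝ) := (Set.Icc (0 : ℝ) 1).indicator (fun s => β s ω) with hf
    have hf_int : Integrable f volume := by
      rw [hf, integrable_indicator_iff measurableSet_Icc]
      exact hω
    have hdiff := IsUnifLocDoublingMeasure.ae_tendsto_average (μ := (volume : Measure ℝ))
      hf_int.locallyIntegrable 1
    have h1 : ∀ᵐ t ∂μ, t ∈ Set.Ico (0 : ℝ) 1 := by
      have h2 : ∀ᵐ t ∂μ, t ∈ Set.Icc (0 : ℝ) 1 := ae_restrict_mem measurableSet_Icc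
      have h3 : ∀ᵐ t ∂μ, t ≠ 1 := by
        refine ae_restrict_of_ae ?_
        rw [ae_iff]
        simp only [not_not, Set.setOf_eq_eq_singleton]
        exact measure_singleton 1
      filter_upwards [h2, h3] with t ht ht1 using ⟨ht.1, lt_of_le_of_ne ht.2 ht1⟩
    filter_upwards [ae_restrict_of_ae hdiff, h1] with t ht ht01
    have hfloor0 : ∀ n : ℕ, (0 : ℤ) ≤ ⌊t * 2 ^ n⌋ := fun n =>
      Int.floor_nonneg.2 (mul_nonneg ht01.1 (by positivity))
    have hfloor1 : ∀ n : ℕ, (⌊t * 2 ^ n⌋ : ℝ) + 1 ≤ 2 ^ n := by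
      intro n
      have : ⌊t * 2 ^ n⌋ < (2 ^ n : ℤ) := by
        rw [Int.floor_lt]
        push_cast
        calc t * 2 ^ n < 1 * 2 ^ n := by
              apply mul_lt_mul_of_pos_right ht01.2 (by positivity)
          _ = 2 ^ n := one_mul _
      have := Int.add_one_le_iff.2 this
      exact_mod_cast this
    -- the dyadic interval as a closed ball
    set w : ℕ → ℝ := fun n => ((⌊t * 2 ^ n⌋ : ℝ) + 2⁻¹) / 2 ^ n with hw
    set δ : ℕ → ℝ := fun n => 2⁻¹ / 2 ^ n with hδ
    have hball : ∀ n, Metric.closedBall (w n) (δ n) =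
        Set.Icc ((⌊t * 2 ^ n⌋ : ℝ) / 2 ^ n) (((⌊t * 2 ^ n⌋ : ℝ) + 1) / 2 ^ n) := by
      intro n
      rw [Real.closedBall_eq_Icc]
      congr 1 <;> · simp only [hw, hδ]; ring
    have hδlim : Tendsto δ atTop (𝓝[>] 0) := by
      apply tendsto_nhdsWithin_of_tendsto_nhds_of_eventually_within
      · have : Tendsto (fun n : ℕ => ((2 : ℝ)⁻¹) ^ n) atTop (𝓝 0) :=
          tendsto_pow_atTop_nhds_zero_of_lt_one (by norm_num) (by norm_num)
        have h2 : δ = fun n : ℕ => 2⁻¹ * (2⁻¹) ^ n := by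
          funext n; simp only [hδ]; rw [div_eq_mul_inv, ← inv_pow]
        rw [h2]
        simpa using this.const_mul (2 : ℝ)⁻¹
      · filter_upwards with n
        simp only [hδ, Set.mem_Ioi]; positivity
    have hmem : ∀ᶠ n in atTop, t ∈ Metric.closedBall (w n) (1 * δ n) := by
      filter_upwards with n
      rw [one_mul, hball n, Set.mem_Icc]
      constructor
      · rw [div_le_iff₀ (by positivity)]
        exact Int.floor_le _
      · rw [le_div_iff₀ (by positivity)]
        exact (Int.lt_floor_add_one _).le
    have key := ht w δ hδlim hmem
    -- identify the average with A n t ω, and f t with β t ω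
    have hft : f t = β t ω := Set.indicator_of_mem (Set.mem_Icc.2 ⟨ht01.1, ht01.2.le⟩) _
    rw [hft] at key
    apply key.congr
    intro n
    rw [hball n]
    have hsub : Set.Icc ((⌊t * 2 ^ n⌋ : ℝ) / 2 ^ n) (((⌊t * 2 ^ n⌋ : ℝ) + 1) / 2 ^ n) ⊆
        Set.Icc (0 : ℝ) 1 := by
      apply Set.Icc_subset_Icc
      · apply div_nonneg _ (by positivity)
        exact_mod_cast hfloor0 n
      · rw [div_le_one (by positivity)]
        exact hfloor1 n
    have hcongr : ∫ s in Set.Icc ((⌊t * 2 ^ n⌋ : ℝ) / 2 ^ n)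
          (((⌊t * 2 ^ n⌋ : ℝ) + 1) / 2 ^ n), f s
        = ∫ s in Set.Icc ((⌊t * 2 ^ n⌋ : ℝ) / 2 ^ n)
          (((⌊t * 2 ^ n⌋ : ℝ) + 1) / 2 ^ n), β s ω := by
      apply setIntegral_congr_fun measurableSet_Icc
      intro s hs
      exact Set.indicator_of_mem (hsub hs) _
    rw [setAverage_eq, hcongr]
    have hlen : ((⌊t * 2 ^ n⌋ : ℝ) + 1) / 2 ^ n - (⌊t * 2 ^ n⌋ : ℝ) / 2 ^ n
        = ((2 : ℝ) ^ n)⁻¹ := by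
      field_simp
      ring
    have hvol : (volume (Set.Icc ((⌊t * 2 ^ n⌋ : ℝ) / 2 ^ n)
        (((⌊t * 2 ^ n⌋ : ℝ) + 1) / 2 ^ n))).toReal = ((2 : ℝ) ^ n)⁻¹ := by
      rw [Real.volume_Icc, hlen, ENNReal.toReal_ofReal (by positivity)]
    rw [measureReal_def, hvol]
    simp only [hA, inv_inv]
  -- swap the a.e. quantifiers
  have H : ∀ᵐ t ∂μ, ∀ᵐ ω ∂P, Tendsto (fun n => A n t ω) atTop (𝓝 (β t ω)) :=
    (Measure.ae_ae_comm hTmeas).mp Hswap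
  -- conclude weak convergence of laws
  filter_upwards [H] with t ht
  rw [ProbabilityMeasure.tendsto_iff_forall_integral_tendsto]
  intro g
  have hAt' : ∀ n : ℕ, Measurable (fun ω => (2 : ℝ) ^ n •
      ∫ s in Set.Icc ((⌊t * 2 ^ n⌋ : ℝ) / 2 ^ n) (((⌊t * 2 ^ n⌋ : ℝ) + 1) / 2 ^ n), β s ω) := by
    intro n
    exact Measurable.const_smul (M := ℝ)
      (((hβmeas.comp measurable_swap).stronglyMeasurable.integral_prod_right'
        (ν := volume.restrict (Set.Icc ((⌊t * 2 ^ n⌋ : ℝ) / 2 ^ n)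
          (((⌊t * 2 ^ n⌋ : ℝ) + 1) / 2 ^ n)))).measurable) ((2 : ℝ) ^ n)
  have hAt : ∀ n, Measurable (fun ω => A n t ω) := by
    intro n; simp only [hA]; exact hAt' n
  have hβt : Measurable (β t) := hβmeas.comp measurable_prodMk_left
  have hmap1 : ∀ n, ∫ x, g x ∂(Ln n t : Measure (Fin d → ℝ)) = ∫ ω, g (A n t ω) ∂P := by
    intro n
    rw [hLn n t, integral_map (hAt' n).aemeasurable g.continuous.aestronglyMeasurable]
  have hmap2 : ∫ x, g x ∂(L t : Measure (Fin d → ℝ)) = ∫ ω, g (β t ω) ∂P := by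
    rw [hL t]
    exact integral_map hβt.aemeasurable g.continuous.aestronglyMeasurable
  simp only [hmap1, hmap2]
  apply tendsto_integral_of_dominated_convergence (fun _ => ‖g‖)
  · exact fun n => (g.continuous.measurable.comp (hAt n)).aestronglyMeasurable
  · exact integrable_const _
  · intro n
    filter_upwards with ω using g.norm_coe_le_norm _
  · filter_upwards [ht] with ω hω using (g.continuous.tendsto _).comp hω
end

section
/- Let $(\Omega, \mathcal{F}, \mathbb{P})$ be a probability space and $\beta : [0,1] \times \Omega \to \mathbb{R}^d$ jointly measurable with $\int_\Omega \int_0^1 |\beta_t(\omega)|\, dt\, \mathbb{P}(d\omega) < \infty$. For $n \in \mathbb{N}$ and $t \in [0,1)$ define $A_n(t) := 2^n \int_{\lfloor t 2^n \rfloor 2^{-n}}^{(\lfloor t 2^n \rfloor + 1) 2^{-n}} \beta_s\, ds$. Let $f : \mathcal{P}(\mathbb{R}^d) \to \mathbb{R}$ be bounded from below and lower semicontinuous with respect to weak convergence. Then $\liminf_{n \to \infty} \int_0^1 f(\mathcal{L}(A_n(t)))\, dt \ge \int_0^1 f(\mathcal{L}(\beta_t))\, dt$, where the integrals are well defined in $(-\infty,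 +\infty]$. -/
open MeasureTheory Filter Topology Set
open scoped ENNReal NNReal

namespace Stmt13Aux

/-- The dyadic interval of generation `n` containing `t`. -/
noncomputable def dI (n : ℕ) (t : ℝ) : Set ℝ :=
  Set.Icc ((⌊t * 2 ^ n⌋ : ℝ) / 2 ^ n) (((⌊t * 2 ^ n⌋ : ℝ) + 1) / 2 ^ n)

/-- The dyadic average of generation `n` of `g` at `t`. -/
noncomputable def dA {d : ℕ} (n : ℕ) (g : ℝ → Fin d → ℝ) (t : ℝ) : Fin d → ℝ :=
  (2 : ℝ) ^ n • ∫ s in dI n t, g s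

lemma two_pow_pos (n : ℕ) : (0:ℝ) < 2 ^ n := by positivity

lemma floor_eq (n : ℕ) (k : ℤ) {t : ℝ} (h1 : (k:ℝ)/2^n ≤ t) (h2 : t < ((k:ℝ)+1)/2^n) :
    ⌊t * 2^n⌋ = k := by
  have h2n := two_pow_pos n
  rw [Int.floor_eq_iff]
  constructor
  · calc (k:ℝ) = (k:ℝ)/2^n * 2^n := by field_simp
    _ ≤ t * 2^n := by gcongr
  · have := (lt_div_iff₀ h2n).mp h2
    push_cast
    linarith

lemma self_mem_dI (n : ℕ) (t : ℝ) : t ∈ dI n t := by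
  have h2n := two_pow_pos n
  constructor
  · rw [div_le_iff₀ h2n]
    exact Int.floor_le _
  · rw [le_div_iff₀ h2n]
    exact (Int.lt_floor_add_one _).le

lemma dI_subset {n : ℕ} {t : ℝ} (ht : t ∈ Ico (0:ℝ) 1) : dI n t ⊆ Icc 0 1 := by
  have h2n := two_pow_pos n
  have h0 : (0:ℤ) ≤ ⌊t * 2^n⌋ := Int.floor_nonneg.2 (by nlinarith [ht.1])
  have h1 : ⌊t * 2^n⌋ < 2^n := by
    have : t * 2^n < (2:ℝ)^n := by nlinarith [ht.2]
    exact Int.floor_lt.2 (by push_cast; linarith)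
  apply Set.Icc_subset_Icc
  · positivity
  · rw [div_le_one h2n]
    have : (⌊t * 2^n⌋ : ℝ) + 1 ≤ ((2^n : ℤ) : ℝ) := by exact_mod_cast h1
    push_cast at this ⊢
    linarith

lemma measurable_dA {d : ℕ} (n : ℕ) (g : ℝ → Fin d → ℝ) : Measurable (dA n g) := by
  have : dA n g = (fun k : ℤ =>
      (2 : ℝ) ^ n • ∫ s in Set.Icc ((k:ℝ) / 2 ^ n) (((k:ℝ) + 1) / 2 ^ n), g s) ∘
      (fun t => ⌊t * 2 ^ n⌋) := rfl
  rw [this]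
  exact measurable_from_top.comp (Int.measurable_floor.comp (measurable_id.mul_const _))

lemma union_pieces (n : ℕ) :
    (⋃ k ∈ Finset.range (2^n), Ico ((k:ℝ)/2^n) (((k:ℝ)+1)/2^n)) = Ico (0:ℝ) 1 := by
  have h2n := two_pow_pos n
  ext t
  simp only [Set.mem_iUnion, Finset.mem_range, Set.mem_Ico]
  constructor
  · rintro ⟨k, hk, h1, h2⟩
    refine ⟨le_trans (by positivity) h1, lt_of_lt_of_le h2 ?_⟩
    rw [div_le_one h2n]
    have : (k:ℝ) + 1 ≤ ((2:ℝ))^n := by exact_mod_cast Nat.succ_le_of_lt hk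
    linarith
  · rintro ⟨h0, h1⟩
    have hf0 : (0:ℤ) ≤ ⌊t * 2^n⌋ := Int.floor_nonneg.2 (by nlinarith)
    have hfl : ⌊t * 2^n⌋ < 2^n := by
      have : t * 2^n < (2:ℝ)^n := by nlinarith
      exact Int.floor_lt.2 (by push_cast; linarith)
    refine ⟨⌊t * 2^n⌋.toNat, ?_, ?_, ?_⟩
    · have hlt : (⌊t * 2 ^ n⌋.toNat : ℤ) < 2 ^ n := by rwa [Int.toNat_of_nonneg hf0]
      exact_mod_cast hlt
    · rw [div_le_iff₀ h2n]
      have hcast : ((⌊t * 2 ^ n⌋.toNat : ℕ) : ℝ) = ((⌊t * 2 ^ n⌋ : ℤ) : ℝ) := by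
        exact_mod_cast congrArg (fun z : ℤ => (z : ℝ)) (Int.toNat_of_nonneg hf0)
      rw [hcast]
      exact Int.floor_le _
    · rw [lt_div_iff₀ h2n]
      have hcast : ((⌊t * 2 ^ n⌋.toNat : ℕ) : ℝ) = ((⌊t * 2 ^ n⌋ : ℤ) : ℝ) := by
        exact_mod_cast congrArg (fun z : ℤ => (z : ℝ)) (Int.toNat_of_nonneg hf0)
      rw [hcast]
      exact Int.lt_floor_add_one _
  
lemma pieces_disjoint (n : ℕ) :
    Set.PairwiseDisjoint (↑(Finset.range (2^n)))
      (fun k : ℕ => Ico ((k:ℝ)/2^n) (((k:ℝ)+1)/2^n)) := by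
  intro i _ j _ hij
  have h2n := two_pow_pos n
  have key : ∀ a b : ℕ, a < b →
      Disjoint (Ico ((a:ℝ)/2^n) (((a:ℝ)+1)/2^n)) (Ico ((b:ℝ)/2^n) (((b:ℝ)+1)/2^n)) := by
    intro a b hab
    rw [Set.Ico_disjoint_Ico]
    have : ((a:ℝ)+1) ≤ (b:ℝ) := by exact_mod_cast hab
    have h1 : ((a:ℝ)+1)/2^n ≤ (b:ℝ)/2^n := by gcongr
    exact le_trans (min_le_left _ _) (le_trans h1 (le_max_right _ _))
  rcases lt_or_gt_of_ne hij with h | h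
  · exact key i j h
  · exact (key j i h).symm

/-- Contraction property of dyadic averaging. -/
lemma contraction {d : ℕ} (n : ℕ) (g : ℝ → Fin d → ℝ) :
    ∫⁻ t in Ico (0:ℝ) 1, (‖dA n g t‖₊ : ℝ≥0∞) ≤ ∫⁻ s in Icc (0:ℝ) 1, (‖g s‖₊ : ℝ≥0∞) := by
  have h2n := two_pow_pos n
  set c : ℝ≥0∞ := ENNReal.ofReal ((2:ℝ)^n) with hc
  have hpt : ∀ t, (‖dA n g t‖₊ : ℝ≥0∞) ≤ c * ∫⁻ s in dI n t, (‖g s‖₊ : ℝ≥0∞) := by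
    intro t
    have h1 : (‖dA n g t‖₊ : ℝ≥0∞) = (‖(2:ℝ)^n‖₊ : ℝ≥0∞) * (‖∫ s in dI n t, g s‖₊ : ℝ≥0∞) := by
      rw [dA, nnnorm_smul, ENNReal.coe_mul]
    rw [h1]
    have h2 : ((‖(2:ℝ)^n‖₊ : ℝ≥0∞)) = c := by
      rw [hc, ← enorm_eq_nnnorm, Real.enorm_eq_ofReal h2n.le]
    rw [h2]
    exact mul_le_mul_right (enorm_integral_le_lintegral_enorm _) _
  calc ∫⁻ t in Ico (0:ℝ) 1, (‖dA n g t‖₊ : ℝ≥0∞)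
      ≤ ∫⁻ t in Ico (0:ℝ) 1, c * ∫⁻ s in dI n t, (‖g s‖₊ : ℝ≥0∞) := lintegral_mono hpt
    _ = ∑ k ∈ Finset.range (2^n), ∫⁻ t in Ico ((k:ℝ)/2^n) (((k:ℝ)+1)/2^n),
          c * ∫⁻ s in dI n t, (‖g s‖₊ : ℝ≥0∞) := by
        rw [← union_pieces n, lintegral_biUnion_finset (pieces_disjoint n)
          (fun _ _ => measurableSet_Ico)]
    _ = ∑ k ∈ Finset.range (2^n), ∫⁻ s in Icc ((k:ℝ)/2^n) (((k:ℝ)+1)/2^n), (‖g s‖₊ : ℝ≥0∞) := by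
        refine Finset.sum_congr rfl (fun k _ => ?_)
        have hcongr : ∫⁻ t in Ico ((k:ℝ)/2^n) (((k:ℝ)+1)/2^n),
            c * ∫⁻ s in dI n t, (‖g s‖₊ : ℝ≥0∞)
            = ∫⁻ _ in Ico ((k:ℝ)/2^n) (((k:ℝ)+1)/2^n),
              c * ∫⁻ s in Icc ((k:ℝ)/2^n) (((k:ℝ)+1)/2^n), (‖g s‖₊ : ℝ≥0∞) := by
          refine setLIntegral_congr_fun measurableSet_Ico (fun t ht => ?_)
          have : dI n t = Icc ((k:ℝ)/2^n) (((k:ℝ)+1)/2^n) := by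
            rw [dI, floor_eq n k ht.1 ht.2]
            push_cast
            ring_nf
          rw [this]
        rw [hcongr, setLIntegral_const]
        have hvol : volume (Ico ((k:ℝ)/2^n) (((k:ℝ)+1)/2^n)) = ENNReal.ofReal (1/2^n) := by
          rw [Real.volume_Ico]
          congr 1
          ring
        rw [hvol, mul_comm c, mul_assoc, hc, ← ENNReal.ofReal_mul (by positivity)]
        have : (2:ℝ)^n * (1/2^n) = 1 := by field_simp
        rw [this, ENNReal.ofReal_one, mul_one]
    _ = ∑ k ∈ Finset.range (2^n), ∫⁻ s in Ico ((k:ℝ)/2^n) (((k:ℝ)+1)/2^n), (‖g s‖₊ : ℝ≥0∞) := by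
        refine Finset.sum_congr rfl (fun k _ => ?_)
        rw [Measure.restrict_congr_set Ico_ae_eq_Icc]
    _ = ∫⁻ s in ⋃ k ∈ Finset.range (2^n), Ico ((k:ℝ)/2^n) (((k:ℝ)+1)/2^n), (‖g s‖₊ : ℝ≥0∞) := by
        rw [lintegral_biUnion_finset (pieces_disjoint n) (fun _ _ => measurableSet_Ico)]
    _ ≤ ∫⁻ s in Icc (0:ℝ) 1, (‖g s‖₊ : ℝ≥0∞) := by
        rw [union_pieces n]
        exact lintegral_mono_set Ico_subset_Icc_self

/-- Uniform convergence of dyadic averages for compactly supported continuous functions. -/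
lemma unif {d : ℕ} (h : ℝ → Fin d → ℝ) (hc : Continuous h) (hs : HasCompactSupport h)
    {ε : ℝ} (hε : 0 < ε) :
    ∃ N : ℕ, ∀ n ≥ N, ∀ t : ℝ, ‖dA n h t - h t‖ ≤ ε := by
  have huc := hc.uniformContinuous_of_tendsto_cocompact hs.is_zero_at_infty
  rw [Metric.uniformContinuous_iff] at huc
  obtain ⟨δ, hδ, hδ'⟩ := huc ε hε
  obtain ⟨N, hN⟩ : ∃ N : ℕ, 1/δ < 2^N := pow_unbounded_of_one_lt _ one_lt_two
  have hNδ : (1:ℝ)/2^N < δ := by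
    rw [div_lt_iff₀ (two_pow_pos N)]
    rw [div_lt_iff₀ hδ] at hN
    linarith [hN]
  refine ⟨N, fun n hn t => ?_⟩
  have h2n := two_pow_pos n
  have hlen : ∀ s ∈ dI n t, dist s t < δ := by
    intro s hsmem
    have := Real.dist_le_of_mem_Icc hsmem (self_mem_dI n t)
    have hsub : ((⌊t * 2^n⌋ : ℝ)+1)/2^n - (⌊t * 2^n⌋ : ℝ)/2^n = 1/2^n := by ring
    rw [hsub] at this
    refine lt_of_le_of_lt this (lt_of_le_of_lt ?_ hNδ)
    exact one_div_le_one_div_of_le (two_pow_pos N) (pow_le_pow_right₀ one_le_two hn)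
  have hIint : IntegrableOn h (dI n t) volume := hc.integrableOn_Icc
  have hvol : volume (dI n t) = ENNReal.ofReal (1/2^n) := by
    rw [dI, Real.volume_Icc]
    congr 1
    ring
  have hkey : dA n h t - h t = (2:ℝ)^n • ∫ s in dI n t, (h s - h t) := by
    rw [integral_sub hIint (integrableOn_const (by rw [hvol]; exact ENNReal.ofReal_ne_top))]
    rw [setIntegral_const, Measure.real, hvol, ENNReal.toReal_ofReal (by positivity)]
    rw [smul_sub, smul_smul, dA]
    have : (2:ℝ)^n * (1/2^n) = 1 := by field_simp
    rw [this, one_smul]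
  rw [hkey, norm_smul, Real.norm_eq_abs, abs_of_pos h2n]
  have hbound : ‖∫ s in dI n t, (h s - h t)‖ ≤ ε * (volume (dI n t)).toReal := by
    refine norm_setIntegral_le_of_norm_le_const ?_ (fun s hsmem => ?_)
    · rw [hvol]; exact ENNReal.ofReal_lt_top
    · rw [← dist_eq_norm]; exact (hδ' (hlen s hsmem)).le
  calc (2:ℝ)^n * ‖∫ s in dI n t, (h s - h t)‖ ≤ (2:ℝ)^n * (ε * (volume (dI n t)).toReal) := by
        gcongr
    _ = ε := by
        rw [hvol, ENNReal.toReal_ofReal (by positivity)]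
        field_simp

/-- Scalar (fixed-`ω`) lemma: dyadic averages converge in `L¹` on `[0,1]`. -/
lemma scalar {d : ℕ} (g : ℝ → Fin d → ℝ) (hg : Integrable g (volume : Measure ℝ)) :
    Tendsto (fun n => ∫⁻ t in Icc (0:ℝ) 1, (‖dA n g t - g t‖₊ : ℝ≥0∞)) atTop (𝓝 0) := by
  rw [ENNReal.tendsto_nhds_zero]
  intro ε hε
  obtain ⟨r, hr0, hr3⟩ : ∃ r : ℝ, 0 < r ∧
      ENNReal.ofReal r + ENNReal.ofReal r + ENNReal.ofReal r ≤ ε := by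
    rcases le_or_gt 1 ε with h1 | h1
    · refine ⟨1/3, by norm_num, ?_⟩
      rw [← ENNReal.ofReal_add (by norm_num) (by norm_num), ← ENNReal.ofReal_add (by norm_num) (by norm_num)]
      norm_num
      exact h1
    · have hεtop : ε ≠ ⊤ := by
        intro hcon; rw [hcon] at h1; exact absurd h1 (by simp)
      have htr : 0 < ε.toReal := ENNReal.toReal_pos hε.ne' hεtop
      refine ⟨ε.toReal/3, by positivity, ?_⟩
      rw [← ENNReal.ofReal_add (by positivity) (by positivity),
        ← ENNReal.ofReal_add (by positivity) (by positivity)]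
      have : ε.toReal/3 + ε.toReal/3 + ε.toReal/3 = ε.toReal := by ring
      rw [this, ENNReal.ofReal_toReal hεtop]
  obtain ⟨h, hsupp, hdist, hcont, hint⟩ :=
    hg.exists_hasCompactSupport_lintegral_sub_le (ε := ENNReal.ofReal r)
      (by simp [hr0, ENNReal.ofReal_eq_zero, not_le])
  obtain ⟨N, hN⟩ := unif h hcont hsupp hr0
  filter_upwards [eventually_ge_atTop N] with n hn
  have hdec : ∀ t, (‖dA n g t - g t‖₊ : ℝ≥0∞) ≤
      (‖dA n (fun s => g s - h s) t‖₊ : ℝ≥0∞) + (‖dA n h t - h t‖₊ : ℝ≥0∞)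
        + (‖h t - g t‖₊ : ℝ≥0∞) := by
    intro t
    have h1 : dA n (fun s => g s - h s) t = dA n g t - dA n h t := by
      simp only [dA]
      rw [integral_sub hg.integrableOn hint.integrableOn, smul_sub]
    have h2 : dA n g t - g t =
        dA n (fun s => g s - h s) t + (dA n h t - h t) + (h t - g t) := by
      rw [h1]; abel
    rw [h2]
    calc (‖dA n (fun s => g s - h s) t + (dA n h t - h t) + (h t - g t)‖₊ : ℝ≥0∞)
        ≤ ((‖dA n (fun s => g s - h s) t + (dA n h t - h t)‖₊ + ‖h t - g t‖₊ : ℝ≥0) : ℝ≥0∞) := by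
          exact_mod_cast nnnorm_add_le _ _
      _ ≤ _ := by
          push_cast
          gcongr
          exact_mod_cast nnnorm_add_le _ _
  have m1 : AEMeasurable (fun t => (‖dA n (fun s => g s - h s) t‖₊ : ℝ≥0∞))
      (volume.restrict (Icc (0:ℝ) 1)) := (measurable_dA n _).enorm.aemeasurable
  have m2 : AEMeasurable (fun t => (‖dA n h t - h t‖₊ : ℝ≥0∞))
      (volume.restrict (Icc (0:ℝ) 1)) :=
    ((measurable_dA n h).sub hcont.measurable).enorm.aemeasurable
  calc ∫⁻ t in Icc (0:ℝ) 1, (‖dA n g t - g t‖₊ : ℝ≥0∞)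
      ≤ ∫⁻ t in Icc (0:ℝ) 1, ((‖dA n (fun s => g s - h s) t‖₊ : ℝ≥0∞)
          + (‖dA n h t - h t‖₊ : ℝ≥0∞) + (‖h t - g t‖₊ : ℝ≥0∞)) :=
        lintegral_mono hdec
    _ = (∫⁻ t in Icc (0:ℝ) 1, (‖dA n (fun s => g s - h s) t‖₊ : ℝ≥0∞))
          + (∫⁻ t in Icc (0:ℝ) 1, (‖dA n h t - h t‖₊ : ℝ≥0∞))
          + (∫⁻ t in Icc (0:ℝ) 1, (‖h t - g t‖₊ : ℝ≥0∞)) := by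
        have m3 : AEMeasurable (fun t => (‖h t - g t‖₊ : ℝ≥0∞)) (volume.restrict (Icc (0:ℝ) 1)) :=
          (hint.aestronglyMeasurable.sub hg.aestronglyMeasurable).restrict.enorm
        rw [lintegral_add_right' _ m3, lintegral_add_right' _ m2]
    _ ≤ ENNReal.ofReal r + ENNReal.ofReal r + ENNReal.ofReal r := by
        gcongr
        · -- contraction term
          rw [← Measure.restrict_congr_set (Ico_ae_eq_Icc (a := (0:ℝ)) (b := 1))]
          refine le_trans (contraction n _) ?_
          refine le_trans (setLIntegral_le_lintegral _ _) ?_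
          exact hdist
        · -- uniform term
          calc ∫⁻ t in Icc (0:ℝ) 1, (‖dA n h t - h t‖₊ : ℝ≥0∞)
              ≤ ∫⁻ _ in Icc (0:ℝ) 1, ENNReal.ofReal r := by
                refine lintegral_mono (fun t => ?_)
                rw [← enorm_eq_nnnorm, ← ofReal_norm_eq_enorm]
                exact ENNReal.ofReal_le_ofReal (hN n hn t)
            _ = ENNReal.ofReal r * volume (Icc (0:ℝ) 1) := setLIntegral_const _ _
            _ ≤ ENNReal.ofReal r * 1 := by
                gcongr
                rw [Real.volume_Icc]
                simp
            _ = ENNReal.ofReal r := mul_one _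
        · -- density term
          refine le_trans (setLIntegral_le_lintegral _ _) ?_
          refine le_trans (le_of_eq ?_) hdist
          refine lintegral_congr (fun t => ?_)
          simp only [← enorm_eq_nnnorm, ← ofReal_norm_eq_enorm, norm_sub_rev]
    _ ≤ ε := hr3

end Stmt13Aux

open Stmt13Aux

theorem stmt_13 (d : ℕ)
    (f : ProbabilityMeasure (Fin d → ℝ) → ℝ)
    (m : ℝ) (hbdd : ∀ ρ, m ≤ f ρ)
    (hlsc : LowerSemicontinuous f)
    (Ω : Type) [MeasurableSpace Ω] (P : Measure Ω) [IsProbabilityMeasure P]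
    (β : ℝ → Ω → (Fin d → ℝ))
    (hβmeas : Measurable (Function.uncurry β))
    (hβint : Integrable (fun p : ℝ × Ω => β p.1 p.2)
      ((volume.restrict (Set.Icc (0 : ℝ) 1)).prod P))
    (Ln : ℕ → ℝ → ProbabilityMeasure (Fin d → ℝ))
    (hLn : ∀ n : ℕ, ∀ t : ℝ, (Ln n t : Measure (Fin d → ℝ)) =
      P.map (fun ω => (2 : ℝ) ^ n •
        ∫ s in Set.Icc ((⌊t * 2 ^ n⌋ : ℝ) / 2 ^ n) (((⌊t * 2 ^ n⌋ : ℝ) + 1) / 2 ^ n),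
          β s ω))
    (L : ℝ → ProbabilityMeasure (Fin d → ℝ))
    (hL : ∀ t : ℝ, (L t : Measure (Fin d → ℝ)) = P.map (β t)) :
    (∫⁻ t in Set.Icc (0 : ℝ) 1, ENNReal.ofReal (f (L t) - m)) ≤
      atTop.liminf (fun n =>
        ∫⁻ t in Set.Icc (0 : ℝ) 1, ENNReal.ofReal (f (Ln n t) - m)) := by
  classical
  set μT : Measure ℝ := volume.restrict (Set.Icc (0 : ℝ) 1) with hμT
  set μ : Measure (ℝ × Ω) := μT.prod P with hμ
  have hrIcc : μT = volume.restrict (Set.Ico (0 : ℝ) 1) :=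
    (Measure.restrict_congr_set Ico_ae_eq_Icc).symm
  have hβmeas' : Measurable (fun p : ℝ × Ω => β p.1 p.2) := hβmeas
  have hβsec : ∀ t, Measurable (β t) := fun t => hβmeas.comp measurable_prodMk_left
  set An : ℕ → ℝ × Ω → (Fin d → ℝ) := fun n p => dA n (fun s => β s p.2) p.1 with hAn
  -- joint measurability of the discretized process
  have hAnMeas : ∀ n, Measurable (An n) := by
    intro n
    have hfloor : Measurable (fun q : (ℝ × Ω) × ℝ => ((⌊q.1.1 * 2 ^ n⌋ : ℝ))) :=
      measurable_from_top.comp (Int.measurable_floor.comp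
        ((measurable_fst.comp measurable_fst).mul_const _))
    have hset : MeasurableSet {q : (ℝ × Ω) × ℝ | q.2 ∈ dI n q.1.1} := by
      have h1 : MeasurableSet {q : (ℝ × Ω) × ℝ | (⌊q.1.1 * 2 ^ n⌋ : ℝ) / 2 ^ n ≤ q.2} :=
        measurableSet_le (hfloor.div_const _) measurable_snd
      have h2 : MeasurableSet {q : (ℝ × Ω) × ℝ | q.2 ≤ ((⌊q.1.1 * 2 ^ n⌋ : ℝ) + 1) / 2 ^ n} :=
        measurableSet_le measurable_snd ((hfloor.add_const 1).div_const _)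
      have heq : {q : (ℝ × Ω) × ℝ | q.2 ∈ dI n q.1.1}
          = {q : (ℝ × Ω) × ℝ | (⌊q.1.1 * 2 ^ n⌋ : ℝ) / 2 ^ n ≤ q.2}
            ∩ {q : (ℝ × Ω) × ℝ | q.2 ≤ ((⌊q.1.1 * 2 ^ n⌋ : ℝ) + 1) / 2 ^ n} := by
        ext q; simp [dI, Set.mem_Icc, and_comm]
      rw [heq]; exact h1.inter h2
    have hF : StronglyMeasurable (fun q : (ℝ × Ω) × ℝ =>
        Set.indicator {q' : (ℝ × Ω) × ℝ | q'.2 ∈ dI n q'.1.1} (fun q' => β q'.2 q'.1.2) q) := by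
      refine (Measurable.indicator ?_ hset).stronglyMeasurable
      exact hβmeas.comp (measurable_snd.prodMk (measurable_snd.comp measurable_fst))
    have hInt := hF.integral_prod_right' (ν := (volume : Measure ℝ))
    have heq : An n = fun p : ℝ × Ω => (2:ℝ)^n • ∫ s, Set.indicator
        {q' : (ℝ × Ω) × ℝ | q'.2 ∈ dI n q'.1.1} (fun q' => β q'.2 q'.1.2) (p, s) ∂volume := by
      funext p
      show dA n (fun s => β s p.2) p.1 = _
      rw [dA, dI, ← integral_indicator measurableSet_Icc]
      rfl
    rw [heq]
    exact (hInt.measurable).const_smul ((2:ℝ)^n)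
  -- the L¹ error on the product space
  set Err : ℕ → ℝ≥0∞ := fun n => ∫⁻ p, (‖An n p - β p.1 p.2‖₊ : ℝ≥0∞) ∂μ with hErrDef
  have hdiffMeas : ∀ n, Measurable (fun p : ℝ × Ω => (‖An n p - β p.1 p.2‖₊ : ℝ≥0∞)) :=
    fun n => ((hAnMeas n).sub hβmeas').enorm
  have hErr : Tendsto Err atTop (𝓝 0) := by
    have hswap : ∀ n, Err n = ∫⁻ ω, (∫⁻ t, (‖An n (t, ω) - β t ω‖₊ : ℝ≥0∞) ∂μT) ∂P :=
      fun n => lintegral_prod_symm _ (hdiffMeas n).aemeasurable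
    have hZ : Tendsto (fun n => ∫⁻ ω, (∫⁻ t, (‖An n (t, ω) - β t ω‖₊ : ℝ≥0∞) ∂μT) ∂P)
        atTop (𝓝 0) := by
      have h0 : (0:ℝ≥0∞) = ∫⁻ _, (0:ℝ≥0∞) ∂P := by simp
      rw [h0]
      refine tendsto_lintegral_of_dominated_convergence
        (bound := fun ω => 2 * ∫⁻ t, (‖β t ω‖₊ : ℝ≥0∞) ∂μT) ?_ ?_ ?_ ?_
      · intro n
        exact Measurable.lintegral_prod_right' ((hdiffMeas n).comp measurable_swap)
      · intro n
        refine ae_of_all _ (fun ω => ?_)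
        have hsecA : Measurable (fun t => An n (t, ω)) :=
          (hAnMeas n).comp (measurable_id.prodMk measurable_const)
        have hcontr : ∫⁻ t, (‖An n (t, ω)‖₊ : ℝ≥0∞) ∂μT ≤ ∫⁻ t, (‖β t ω‖₊ : ℝ≥0∞) ∂μT := by
          have e1 : ∫⁻ t, (‖An n (t, ω)‖₊ : ℝ≥0∞) ∂μT
              = ∫⁻ t in Set.Ico (0:ℝ) 1, (‖dA n (fun s => β s ω) t‖₊ : ℝ≥0∞) := by
            rw [hrIcc]
          rw [e1]
          exact contraction n _
        calc ∫⁻ t, (‖An n (t, ω) - β t ω‖₊ : ℝ≥0∞) ∂μT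
            ≤ ∫⁻ t, ((‖An n (t, ω)‖₊ : ℝ≥0∞) + (‖β t ω‖₊ : ℝ≥0∞)) ∂μT := by
              refine lintegral_mono (fun t => ?_)
              rw [← ENNReal.coe_add]
              exact ENNReal.coe_le_coe.2 (nnnorm_sub_le _ _)
          _ = (∫⁻ t, (‖An n (t, ω)‖₊ : ℝ≥0∞) ∂μT) + ∫⁻ t, (‖β t ω‖₊ : ℝ≥0∞) ∂μT :=
              lintegral_add_left' hsecA.enorm.aemeasurable _
          _ ≤ (∫⁻ t, (‖β t ω‖₊ : ℝ≥0∞) ∂μT) + ∫⁻ t, (‖β t ω‖₊ : ℝ≥0∞) ∂μT :=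
              add_le_add hcontr le_rfl
          _ = 2 * ∫⁻ t, (‖β t ω‖₊ : ℝ≥0∞) ∂μT := (two_mul _).symm
      · have hswap2 : ∫⁻ ω, (∫⁻ t, (‖β t ω‖₊ : ℝ≥0∞) ∂μT) ∂P
            = ∫⁻ p, (‖β p.1 p.2‖₊ : ℝ≥0∞) ∂μ :=
          (lintegral_prod_symm _ hβmeas'.enorm.aemeasurable).symm
        rw [lintegral_const_mul' _ _ (by norm_num : (2:ℝ≥0∞) ≠ ⊤), hswap2]
        exact ENNReal.mul_ne_top (by norm_num) (ne_of_lt hβint.2)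
      · have hsecint : ∀ᵐ ω ∂P, Integrable (fun t => β t ω) μT := hβint.swap.prod_right_ae
        filter_upwards [hsecint] with ω hω
        have hgint : Integrable ((Set.Icc (0:ℝ) 1).indicator (fun t => β t ω)) volume := by
          rw [integrable_indicator_iff measurableSet_Icc]
          exact hω
        refine Tendsto.congr (fun n => ?_) (scalar _ hgint)
        refine lintegral_congr_ae ?_
        have hmem : ∀ᵐ t ∂μT, t ∈ Set.Ico (0:ℝ) 1 := by
          rw [hrIcc]
          exact ae_restrict_mem measurableSet_Ico
        filter_upwards [hmem] with t ht
        have hind : Set.EqOn ((Set.Icc (0:ℝ) 1).indicator (fun u => β u ω))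
            (fun s => β s ω) (dI n t) := fun s hs => Set.indicator_of_mem (dI_subset ht hs) _
        have h2 : dA n ((Set.Icc (0:ℝ) 1).indicator (fun u => β u ω)) t
            = dA n (fun s => β s ω) t := by
          simp only [dA]
          congr 1
          exact setIntegral_congr_fun measurableSet_Icc hind
        rw [h2, Set.indicator_of_mem (Set.Ico_subset_Icc_self ht)]
    exact Tendsto.congr (fun n => (hswap n).symm) hZ
  -- reduce to comparison with any c above the liminf
  refine le_of_forall_gt_imp_ge_of_dense (fun c hc => ?_)
  have hfreq : ∃ᶠ n in atTop,
      (∫⁻ t in Set.Icc (0:ℝ) 1, ENNReal.ofReal (f (Ln n t) - m)) < c :=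
    frequently_lt_of_liminf_lt (h := hc)
  obtain ⟨φ, hφmono, hφc⟩ := extraction_of_frequently_atTop hfreq
  have hErrφ : Tendsto (fun k => Err (φ k)) atTop (𝓝 0) := hErr.comp hφmono.tendsto_atTop
  have hTIM : TendstoInMeasure μ (fun k => An (φ k)) atTop (fun p => β p.1 p.2) := by
    refine tendstoInMeasure_of_tendsto_eLpNorm (p := 1) one_ne_zero
      (fun k => (hAnMeas (φ k)).aestronglyMeasurable) hβmeas'.aestronglyMeasurable ?_
    refine Tendsto.congr (fun k => ?_) hErrφ
    rw [eLpNorm_one_eq_lintegral_enorm]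
    simp only [Pi.sub_apply]
    rfl
  obtain ⟨ψ, hψmono, hae⟩ := hTIM.exists_seq_tendsto_ae
  have hslice : ∀ᵐ t ∂μT, ∀ᵐ ω ∂P,
      Tendsto (fun j => An (φ (ψ j)) (t, ω)) atTop (𝓝 (β t ω)) :=
    Measure.ae_ae_of_ae_prod hae
  have hkey : ∀ᵐ t ∂μT, ENNReal.ofReal (f (L t) - m) ≤
      liminf (fun j => ENNReal.ofReal (f (Ln (φ (ψ j)) t) - m)) atTop := by
    filter_upwards [hslice] with t hωae
    have hconv : Tendsto (fun j => Ln (φ (ψ j)) t) atTop (𝓝 (L t)) := by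
      rw [ProbabilityMeasure.tendsto_iff_forall_integral_tendsto]
      intro g
      have hXm : ∀ N : ℕ, Measurable (fun ω => An N (t, ω)) :=
        fun N => (hAnMeas N).comp (measurable_const.prodMk measurable_id)
      have hrw1 : ∀ j, ∫ x, g x ∂((Ln (φ (ψ j)) t : Measure (Fin d → ℝ)))
          = ∫ ω, g (An (φ (ψ j)) (t, ω)) ∂P := by
        intro j
        rw [hLn]
        exact integral_map (hXm _).aemeasurable g.continuous.aestronglyMeasurable
      have hrw2 : ∫ x, g x ∂((L t : Measure (Fin d → ℝ))) = ∫ ω, g (β t ω) ∂P := by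
        rw [hL]
        exact integral_map (hβsec t).aemeasurable g.continuous.aestronglyMeasurable
      simp only [hrw1, hrw2]
      refine tendsto_integral_of_dominated_convergence (fun _ => ‖g‖) ?_ ?_ ?_ ?_
      · exact fun j => (g.continuous.measurable.comp (hXm _)).aestronglyMeasurable
      · exact integrable_const _
      · exact fun j => ae_of_all _ (fun ω => g.norm_coe_le_norm _)
      · filter_upwards [hωae] with ω hω using (g.continuous.tendsto _).comp hω
    rw [le_liminf_iff]
    intro b hb
    have hbtop : b ≠ ⊤ := (hb.trans ENNReal.ofReal_lt_top).ne
    have hb' : b.toReal < f (L t) - m := (ENNReal.lt_ofReal_iff_toReal_lt hbtop).mp hb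
    have hy : b.toReal + m < f (L t) := by linarith
    have hev := hconv.eventually (hlsc (L t) (b.toReal + m) hy)
    filter_upwards [hev] with j hj
    rw [ENNReal.lt_ofReal_iff_toReal_lt hbtop]
    linarith
  -- measurability of the discretized cost integrands
  have hMn : ∀ N : ℕ, Measurable (fun t => ENNReal.ofReal (f (Ln N t) - m)) := by
    intro N
    have hpc : ∀ t : ℝ, Ln N t = Ln N ((⌊t * 2 ^ N⌋ : ℝ) / 2 ^ N) := by
      intro t
      have h2N : ((2:ℝ)^N) ≠ 0 := by positivity
      have hfl : ⌊((⌊t * 2 ^ N⌋ : ℝ) / 2 ^ N) * 2 ^ N⌋ = ⌊t * 2 ^ N⌋ := by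
        rw [div_mul_cancel₀ _ h2N, Int.floor_intCast]
      apply MeasureTheory.ProbabilityMeasure.toMeasure_injective
      rw [hLn, hLn, hfl]
    have heq : (fun t => ENNReal.ofReal (f (Ln N t) - m))
        = (fun k : ℤ => ENNReal.ofReal (f (Ln N ((k : ℝ) / 2 ^ N)) - m))
          ∘ (fun t : ℝ => ⌊t * 2 ^ N⌋) := by
      funext t
      simp only [Function.comp_apply]
      rw [← hpc t]
    rw [heq]
    exact measurable_from_top.comp (Int.measurable_floor.comp (measurable_id.mul_const _))
  -- conclusion via Fatou's lemma along the subsequence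
  calc ∫⁻ t, ENNReal.ofReal (f (L t) - m) ∂μT
      ≤ ∫⁻ t, liminf (fun j => ENNReal.ofReal (f (Ln (φ (ψ j)) t) - m)) atTop ∂μT :=
        lintegral_mono_ae hkey
    _ ≤ liminf (fun j => ∫⁻ t, ENNReal.ofReal (f (Ln (φ (ψ j)) t) - m) ∂μT) atTop :=
        lintegral_liminf_le' (fun j => (hMn _).aemeasurable)
    _ ≤ c :=
        liminf_le_of_frequently_le (Frequently.of_forall (fun j => (hφc (ψ j)).le))
end

section
/- Let $f : \mathcal{P}(\mathbb{R}^d) \to \mathbb{R}$ be convex in law. Let $(\Omega, \mathcal{F}, \mathbb{P})$ be a probability space and $\beta : [0,1] \times \Omega \to \mathbb{R}^d$ jointly measurable with $\int_\Omega \int_0^1 |\beta_t(\omega)|\, dt\, \mathbb{P}(d\omega) < \infty$. Then for every $n \in \mathbb{N}$: $2^{-(n+1)} \sum_{j=0}^{2^{n+1} - 1} f\Bigl(\mathcal{L}\Bigl(2^{n+1} \int_{j 2^{-(n+1)}}^{(j+1) 2^{-(n+1)}} \beta_s\, ds\Bigr)\Bigr) \ \ge\ 2^{-n} \sum_{i=0}^{2^n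 - 1} f\Bigl(\mathcal{L}\Bigl(2^n \int_{i 2^{-n}}^{(i+1) 2^{-n}} \beta_s\, ds\Bigr)\Bigr)$; that is, the dyadic discretized costs are nondecreasing in $n$. -/
open MeasureTheory

/-- A function `f` on probability measures on `ℝ^d` is *convex in law* if for every
probability space, every pair of integrable `ℝ^d`-valued random variables `Z, W` and every
`l ∈ [0,1]`, one has `f (ℒ(l Z + (1-l) W)) ≤ l f (ℒ Z) + (1-l) f (ℒ W)`. -/
def ConvexInLaw (d : ℕ) (f : ProbabilityMeasure (Fin d → ℝ) → ℝ) : Prop :=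
  ∀ (Ω : Type) (_ : MeasurableSpace Ω) (P : Measure Ω), IsProbabilityMeasure P →
    ∀ (Z W : Ω → (Fin d → ℝ)), Integrable Z P → Integrable W P →
    ∀ l ∈ Set.Icc (0 : ℝ) 1,
    ∀ (ρZ ρW ρS : ProbabilityMeasure (Fin d → ℝ)),
      (ρZ : Measure (Fin d → ℝ)) = P.map Z →
      (ρW : Measure (Fin d → ℝ)) = P.map W →
      (ρS : Measure (Fin d → ℝ)) = P.map (fun ω => l • Z ω + (1 - l) • W ω) →
      f ρS ≤ l * f ρZ + (1 - l) * f ρW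

private lemma sum_range_two_mul' {M : Type*} [AddCommMonoid M] (m : ℕ) (g : ℕ → M) :
    ∑ j ∈ Finset.range (2 * m), g j = ∑ i ∈ Finset.range m, (g (2 * i) + g (2 * i + 1)) := by
  induction m with
  | zero => simp
  | succ m ih =>
    have h : 2 * (m + 1) = 2 * m + 1 + 1 := by omega
    rw [h, Finset.sum_range_succ, Finset.sum_range_succ, Finset.sum_range_succ, ih, add_assoc]

private lemma icc_integral_split {E : Type*} [NormedAddCommGroup E] [NormedSpace ℝ E]
    (g : ℝ → E) (a b c : ℝ) (hab : a ≤ b) (hbc : b ≤ c) (h0 : 0 ≤ a) (hc1 : c ≤ 1)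
    (hg : Integrable g (volume.restrict (Set.Icc (0:ℝ) 1))) :
    ∫ s in Set.Icc a c, g s = (∫ s in Set.Icc a b, g s) + ∫ s in Set.Icc b c, g s := by
  have hsub : ∀ u v : ℝ, a ≤ u → v ≤ c → Set.Ioc u v ⊆ Set.Icc (0:ℝ) 1 := by
    intro u v hu hv
    exact Set.Ioc_subset_Icc_self.trans (Set.Icc_subset_Icc (h0.trans hu) (hv.trans hc1))
  have h1 : IntegrableOn g (Set.Ioc a b) volume :=
    hg.mono_measure (Measure.restrict_mono (hsub a b le_rfl hbc) le_rfl)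
  have h2 : IntegrableOn g (Set.Ioc b c) volume :=
    hg.mono_measure (Measure.restrict_mono (hsub b c hab le_rfl) le_rfl)
  rw [integral_Icc_eq_integral_Ioc, integral_Icc_eq_integral_Ioc, integral_Icc_eq_integral_Ioc,
    ← Set.Ioc_union_Ioc_eq_Ioc hab hbc,
    setIntegral_union (Set.Ioc_disjoint_Ioc_of_le le_rfl) measurableSet_Ioc h1 h2]

/-- Monotonicity of the dyadic discretized costs: for `f` convex in law and
`β : [0,1] × Ω → ℝ^d` jointly measurable and integrable, the `(n+1)`-th generation dyadic
cost dominates the `n`-th one: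
`2^{-(n+1)} ∑_{j<2^{n+1}} f (ℒ(2^{n+1} ∫_{j2^{-(n+1)}}^{(j+1)2^{-(n+1)}} β_s ds))
  ≥ 2⁻ⁿ ∑_{i<2ⁿ} f (ℒ(2ⁿ ∫_{i2⁻ⁿ}^{(i+1)2⁻ⁿ} β_s ds))`. -/
theorem stmt_15 (d : ℕ) (f : ProbabilityMeasure (Fin d → ℝ) → ℝ)
    (hconv : ConvexInLaw d f)
    (Ω : Type) [MeasurableSpace Ω] (P : Measure Ω) [IsProbabilityMeasure P]
    (β : ℝ → Ω → (Fin d → ℝ))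
    (hβmeas : Measurable (Function.uncurry β))
    (hβint : Integrable (fun p : ℝ × Ω => β p.1 p.2)
      ((volume.restrict (Set.Icc (0 : ℝ) 1)).prod P))
    (n : ℕ)
    (ρ : Fin (2 ^ (n + 1)) → ProbabilityMeasure (Fin d → ℝ))
    (hρ : ∀ j : Fin (2 ^ (n + 1)), (ρ j : Measure (Fin d → ℝ)) =
      P.map (fun ω => (2 : ℝ) ^ (n + 1) •
        ∫ s in Set.Icc ((j : ℝ) / 2 ^ (n + 1)) (((j : ℝ) + 1) / 2 ^ (n + 1)), β s ω))
    (σ : Fin (2 ^ n) → ProbabilityMeasure (Fin d → ℝ))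
    (hσ : ∀ i : Fin (2 ^ n), (σ i : Measure (Fin d → ℝ)) =
      P.map (fun ω => (2 : ℝ) ^ n •
        ∫ s in Set.Icc ((i : ℝ) / 2 ^ n) (((i : ℝ) + 1) / 2 ^ n), β s ω)) :
    ((2 : ℝ) ^ n)⁻¹ * ∑ i, f (σ i) ≤ ((2 : ℝ) ^ (n + 1))⁻¹ * ∑ j, f (ρ j) := by
  -- integrability of the averaged functions
  have hSub : ∀ (S : Set ℝ), MeasurableSet S → S ⊆ Set.Icc (0:ℝ) 1 →
      Integrable (fun ω => ∫ s in S, β s ω) P := by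
    intro S hS hSsub
    have h0 : volume.restrict S = (volume.restrict (Set.Icc (0:ℝ) 1)).restrict S := by
      rw [Measure.restrict_restrict hS, Set.inter_eq_left.mpr hSsub]
    have h1 : Integrable (fun p : ℝ × Ω => β p.1 p.2) ((volume.restrict S).prod P) := by
      rw [h0]
      have h2 := Measure.prod_restrict (μ := volume.restrict (Set.Icc (0:ℝ) 1)) (ν := P)
        S Set.univ
      rw [Measure.restrict_univ] at h2
      rw [h2]
      exact hβint.restrict
    exact h1.integral_prod_right
  have hIccSub : ∀ j : Fin (2 ^ (n+1)),
      Set.Icc ((j : ℝ) / 2 ^ (n+1)) (((j : ℝ) + 1) / 2 ^ (n+1)) ⊆ Set.Icc (0:ℝ) 1 := by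
    intro j
    refine Set.Icc_subset_Icc (by positivity) ?_
    rw [div_le_one (by positivity)]
    exact_mod_cast Nat.succ_le_of_lt j.isLt
  -- the key convexity step
  have key : ∀ i : Fin (2^n), ∀ (h0 : 2 * i.val < 2^(n+1)) (h1 : 2 * i.val + 1 < 2^(n+1)),
      f (σ i) ≤ 2⁻¹ * (f (ρ ⟨2 * i.val, h0⟩) + f (ρ ⟨2 * i.val + 1, h1⟩)) := by
    intro i h0 h1
    have hv0 : (((⟨2 * i.val, h0⟩ : Fin (2^(n+1))) : ℕ) : ℝ) = 2 * ((i : ℕ) : ℝ) := by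
      show ((2 * (i:ℕ) : ℕ) : ℝ) = _; push_cast; ring
    have hv1 : (((⟨2 * i.val + 1, h1⟩ : Fin (2^(n+1))) : ℕ) : ℝ) = 2 * ((i : ℕ) : ℝ) + 1 := by
      show ((2 * (i:ℕ) + 1 : ℕ) : ℝ) = _; push_cast; ring
    have hilt : ((i : ℕ) : ℝ) + 1 ≤ 2 ^ n := by exact_mod_cast Nat.succ_le_of_lt i.isLt
    have hx0 : (0:ℝ) ≤ ((i:ℕ):ℝ) := Nat.cast_nonneg _
    have hq : (0:ℝ) < 2 ^ (n+1) := by positivity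
    have hab : (2 * ((i:ℕ):ℝ)) / 2^(n+1) ≤ (2 * ((i:ℕ):ℝ) + 1) / 2^(n+1) := by
      gcongr; linarith
    have hbc : (2 * ((i:ℕ):ℝ) + 1) / 2^(n+1) ≤ (2 * ((i:ℕ):ℝ) + 2) / 2^(n+1) := by
      gcongr; linarith
    have h0a : (0:ℝ) ≤ (2 * ((i:ℕ):ℝ)) / 2^(n+1) := by positivity
    have hc1 : (2 * ((i:ℕ):ℝ) + 2) / 2^(n+1) ≤ 1 := by
      rw [div_le_one hq, pow_succ]; linarith
    have eσ0 : ((i:ℕ):ℝ) / 2^n = (2 * ((i:ℕ):ℝ)) / 2^(n+1) := by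
      rw [pow_succ]; field_simp
    have eσ1 : (((i:ℕ):ℝ) + 1) / 2^n = (2 * ((i:ℕ):ℝ) + 2) / 2^(n+1) := by
      rw [pow_succ]; field_simp
    have hZint : Integrable (fun ω => (2:ℝ)^(n+1) •
        ∫ s in Set.Icc (((⟨2 * i.val, h0⟩ : Fin (2^(n+1))) : ℝ) / 2^(n+1)) ((((⟨2 * i.val, h0⟩ : Fin (2^(n+1))) : ℝ) + 1) / 2^(n+1)), β s ω) P :=
      (hSub _ measurableSet_Icc (hIccSub _)).smul ((2:ℝ)^(n+1)) |>.congr (Filter.Eventually.of_forall fun ω => rfl)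
    have hWint : Integrable (fun ω => (2:ℝ)^(n+1) •
        ∫ s in Set.Icc (((⟨2 * i.val + 1, h1⟩ : Fin (2^(n+1))) : ℝ) / 2^(n+1)) ((((⟨2 * i.val + 1, h1⟩ : Fin (2^(n+1))) : ℝ) + 1) / 2^(n+1)), β s ω) P :=
      (hSub _ measurableSet_Icc (hIccSub _)).smul ((2:ℝ)^(n+1)) |>.congr (Filter.Eventually.of_forall fun ω => rfl)
    have hmap : ((σ i : Measure (Fin d → ℝ))) = P.map (fun ω =>
        (2:ℝ)⁻¹ • ((2:ℝ)^(n+1) •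
          ∫ s in Set.Icc (((⟨2 * i.val, h0⟩ : Fin (2^(n+1))) : ℝ) / 2^(n+1)) ((((⟨2 * i.val, h0⟩ : Fin (2^(n+1))) : ℝ) + 1) / 2^(n+1)), β s ω)
        + (1 - (2:ℝ)⁻¹) • ((2:ℝ)^(n+1) •
          ∫ s in Set.Icc (((⟨2 * i.val + 1, h1⟩ : Fin (2^(n+1))) : ℝ) / 2^(n+1)) ((((⟨2 * i.val + 1, h1⟩ : Fin (2^(n+1))) : ℝ) + 1) / 2^(n+1)), β s ω)) := by
      rw [hσ i]
      refine Measure.map_congr ?_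
      filter_upwards [hβint.prod_left_ae] with ω hω
      rw [hv0, hv1, eσ0, eσ1,
        show (2 * ((i:ℕ):ℝ) + 1) + 1 = 2 * ((i:ℕ):ℝ) + 2 by ring,
        icc_integral_split (fun s => β s ω) _ _ _ hab hbc h0a hc1 hω,
        smul_add, smul_smul, smul_smul,
        show (2:ℝ)⁻¹ * 2^(n+1) = 2^n by rw [pow_succ]; ring,
        show (1 - (2:ℝ)⁻¹) * 2^(n+1) = 2^n by rw [pow_succ]; ring]
    have h := hconv Ω ‹_› P inferInstance _ _ hZint hWint 2⁻¹
      ⟨by norm_num, by norm_num⟩ (ρ ⟨2 * i.val, h0⟩) (ρ ⟨2 * i.val + 1, h1⟩) (σ i)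
      (hρ _) (hρ _) hmap
    linarith
  -- reindexing the sum
  set g : ℕ → ℝ := fun j => if h : j < 2^(n+1) then f (ρ ⟨j, h⟩) else 0 with hg
  have hgsum : ∑ j, f (ρ j) = ∑ j ∈ Finset.range (2^(n+1)), g j := by
    rw [Finset.sum_range]
    exact Finset.sum_congr rfl fun j _ => by simp [hg, j.isLt]
  have hsplit : ∑ j ∈ Finset.range (2^(n+1)), g j
      = ∑ i : Fin (2^n), (g (2 * i.val) + g (2 * i.val + 1)) := by
    rw [show 2^(n+1) = 2 * 2^n from by rw [pow_succ]; ring, sum_range_two_mul',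
      Finset.sum_range]
  have hsum : ∑ i, f (σ i) ≤ 2⁻¹ * ∑ j, f (ρ j) := by
    rw [hgsum, hsplit, Finset.mul_sum]
    refine Finset.sum_le_sum fun i _ => ?_
    have h0 : 2 * i.val < 2^(n+1) := by have := i.isLt; rw [pow_succ]; omega
    have h1 : 2 * i.val + 1 < 2^(n+1) := by have := i.isLt; rw [pow_succ]; omega
    simp only [hg, h0, h1, dif_pos]
    exact key i h0 h1
  calc ((2:ℝ)^n)⁻¹ * ∑ i, f (σ i) ≤ ((2:ℝ)^n)⁻¹ * (2⁻¹ * ∑ j, f (ρ j)) := by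
        exact mul_le_mul_of_nonneg_left hsum (by positivity)
    _ = ((2:ℝ)^(n+1))⁻¹ * ∑ j, f (ρ j) := by rw [pow_succ (2:ℝ) n, mul_inv]; ring
end

section
/- Let $g : [0,1] \to \mathbb{R}^d$ be continuous and $x_0 \in \mathbb{R}^d$. Define $x : [0,1) \to \mathbb{R}^d$ by $x(t) := x_0 (1-t) + (1-t) \int_0^t \frac{g(s)}{(1-s)^2}\, ds$. Then $x(0) = x_0$, $x$ is differentiable on $[0,1)$ with $x'(t) = \frac{g(t) - x(t)}{1-t}$ for all $t \in [0,1)$, and $\lim_{t \to 1^-} x(t) = g(1)$. -/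
open MeasureTheory Filter Topology Set

private lemma invsq_hasDerivAt {s : ℝ} (hs : s ≠ 1) :
    HasDerivAt (fun u : ℝ => (1 - u)⁻¹) (((1 - s) ^ 2)⁻¹) s := by
  have h : HasDerivAt (fun u : ℝ => 1 - u) (-1) s := by
    simpa using (hasDerivAt_id s).const_sub 1
  have := h.inv (sub_ne_zero.2 (Ne.symm hs))
  simpa [neg_div, Pi.inv_def] using this

private lemma contOn_invsq {s : Set ℝ} (h : ∀ x ∈ s, x ≠ 1) :
    ContinuousOn (fun u : ℝ => ((1 - u) ^ 2)⁻¹) s := by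
  apply ContinuousOn.inv₀
  · fun_prop
  · exact fun x hx => pow_ne_zero _ (sub_ne_zero.2 (Ne.symm (h x hx)))

private lemma uIcc_subset_Iio {a b : ℝ} (ha : a < 1) (hb : b < 1) :
    uIcc a b ⊆ Iio 1 :=
  fun x hx => lt_of_le_of_lt hx.2 (max_lt ha hb)

private lemma integral_invsq {a b : ℝ} (ha : a < 1) (hb : b < 1) :
    ∫ s in a..b, ((1 - s) ^ 2)⁻¹ = (1 - b)⁻¹ - (1 - a)⁻¹ := by
  apply intervalIntegral.integral_eq_sub_of_hasDerivAt
  · exact fun x hx => invsq_hasDerivAt (ne_of_lt (uIcc_subset_Iio ha hb hx))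
  · exact (contOn_invsq (fun x hx => ne_of_lt (uIcc_subset_Iio ha hb hx))).intervalIntegrable

private lemma contOn_f {d : ℕ} {G : ℝ → Fin d → ℝ} (hG : Continuous G) :
    ContinuousOn (fun s : ℝ => ((1 - s) ^ 2)⁻¹ • G s) (Iio (1:ℝ)) :=
  (contOn_invsq (fun x hx => ne_of_lt hx)).smul hG.continuousOn

private lemma hasDerivAt_X {d : ℕ} {G : ℝ → Fin d → ℝ} (hG : Continuous G)
    (x₀ : Fin d → ℝ) {t : ℝ} (ht : t < 1) :
    HasDerivAt (fun u => (1 - u) • x₀ + (1 - u) • ∫ s in (0:ℝ)..u, ((1 - s) ^ 2)⁻¹ • G s)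
      ((1 - t)⁻¹ • (G t - ((1 - t) • x₀ + (1 - t) • ∫ s in (0:ℝ)..t, ((1 - s) ^ 2)⁻¹ • G s))) t := by
  have h1t : (1:ℝ) - t ≠ 0 := sub_ne_zero.2 (Ne.symm (ne_of_lt ht))
  have hfc := contOn_f hG
  have hint : IntervalIntegrable (fun s : ℝ => ((1 - s) ^ 2)⁻¹ • G s) volume 0 t :=
    (hfc.mono (uIcc_subset_Iio one_pos ht)).intervalIntegrable
  have hF : HasDerivAt (fun u => ∫ s in (0:ℝ)..u, ((1 - s) ^ 2)⁻¹ • G s)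
      (((1 - t) ^ 2)⁻¹ • G t) t :=
    intervalIntegral.integral_hasDerivAt_right hint
      (hfc.stronglyMeasurableAtFilter isOpen_Iio t ht)
      (hfc.continuousAt (Iio_mem_nhds ht))
  have h1 : HasDerivAt (fun u : ℝ => 1 - u) (-1) t := by
    simpa using (hasDerivAt_id t).const_sub 1
  have hA := (h1.smul_const x₀).add (h1.smul hF)
  refine hA.congr_deriv ?_
  ext i; simp only [Pi.add_apply, Pi.sub_apply, Pi.smul_apply, smul_eq_mul]; field_simp; ring

private lemma tendsto_X {d : ℕ} {G : ℝ → Fin d → ℝ} (hG : Continuous G) (x₀ : Fin d → ℝ) :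
    Tendsto (fun t => (1 - t) • x₀ + (1 - t) • ∫ s in (0:ℝ)..t, ((1 - s) ^ 2)⁻¹ • G s)
      (𝓝[<] (1:ℝ)) (𝓝 (G 1)) := by
  set K : ℝ → Fin d → ℝ := fun t => ∫ s in (0:ℝ)..t, ((1 - s) ^ 2)⁻¹ • (G s - G 1) with hKdef
  have hfc : ContinuousOn (fun s : ℝ => ((1 - s) ^ 2)⁻¹ • (G s - G 1)) (Iio 1) :=
    (contOn_invsq fun x hx => ne_of_lt hx).smul (hG.sub continuous_const).continuousOn
  have hintK : ∀ {a b : ℝ}, a < 1 → b < 1 →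
      IntervalIntegrable (fun s : ℝ => ((1 - s) ^ 2)⁻¹ • (G s - G 1)) volume a b :=
    fun ha hb => (hfc.mono (uIcc_subset_Iio ha hb)).intervalIntegrable
  have key : ∀ t ∈ Iio (1:ℝ), (1 - t) • x₀ + (1 - t) • ∫ s in (0:ℝ)..t, ((1 - s) ^ 2)⁻¹ • G s
      = G 1 + ((1 - t) • (x₀ - G 1) + (1 - t) • K t) := by
    intro t ht
    have h1t : (1:ℝ) - t ≠ 0 := sub_ne_zero.2 (Ne.symm (ne_of_lt ht))
    have hint2 : IntervalIntegrable (fun s : ℝ => ((1 - s) ^ 2)⁻¹ • G 1) volume 0 t :=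
      (((contOn_invsq fun x hx => ne_of_lt hx).smul
        continuousOn_const).mono (uIcc_subset_Iio one_pos ht)).intervalIntegrable
    have hsplit : ∫ s in (0:ℝ)..t, ((1 - s) ^ 2)⁻¹ • G s = K t + ((1 - t)⁻¹ - 1) • G 1 := by
      calc ∫ s in (0:ℝ)..t, ((1 - s) ^ 2)⁻¹ • G s
          = ∫ s in (0:ℝ)..t, (((1 - s) ^ 2)⁻¹ • (G s - G 1) + ((1 - s) ^ 2)⁻¹ • G 1) := by
            congr 1; funext s; rw [← smul_add, sub_add_cancel]
        _ = K t + ∫ s in (0:ℝ)..t, ((1 - s) ^ 2)⁻¹ • G 1 :=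
            intervalIntegral.integral_add (hintK one_pos ht) hint2
        _ = K t + ((1 - t)⁻¹ - 1) • G 1 := by
            rw [intervalIntegral.integral_smul_const, integral_invsq one_pos ht]
            norm_num
    rw [hsplit]
    match_scalars <;> field_simp <;> ring
  have h1 : Tendsto (fun t : ℝ => 1 - t) (𝓝[<] (1:ℝ)) (𝓝 0) := by
    have h : Tendsto (fun t : ℝ => 1 - t) (𝓝 (1:ℝ)) (𝓝 (1 - 1)) :=
      (continuous_const.sub continuous_id).tendsto 1
    simpa using h.mono_left nhdsWithin_le_nhds
  have hA : Tendsto (fun t : ℝ => (1 - t) • (x₀ - G 1)) (𝓝[<] (1:ℝ)) (𝓝 0) := by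
    simpa using h1.smul_const (x₀ - G 1)
  have hB : Tendsto (fun t : ℝ => (1 - t) • K t) (𝓝[<] (1:ℝ)) (𝓝 0) := by
    rw [NormedAddCommGroup.tendsto_nhds_zero]
    intro ε hε
    obtain ⟨δ, hδ, hd⟩ := Metric.continuousAt_iff.1 (hG.continuousAt (x := 1)) (ε/4) (by linarith)
    set a : ℝ := max 0 (1 - δ/2) with hadef
    have ha0 : (0:ℝ) ≤ a := le_max_left _ _
    have ha1 : a < 1 := max_lt one_pos (by linarith)
    have haδ : 1 - δ/2 ≤ a := le_max_right _ _
    have hKa : Tendsto (fun t : ℝ => (1 - t) * ‖K a‖) (𝓝[<] (1:ℝ)) (𝓝 0) := by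
      simpa using h1.mul_const ‖K a‖
    filter_upwards [Ioo_mem_nhdsLT_of_mem (show (1:ℝ) ∈ Ioc a 1 from ⟨ha1, le_refl 1⟩),
      hKa.eventually_lt_const (show (0:ℝ) < ε/2 by linarith)] with t htmem hKlt
    obtain ⟨hat, ht1⟩ := htmem
    have h1t : (0:ℝ) < 1 - t := by linarith
    have hsplitK : K t = K a + ∫ s in a..t, ((1 - s) ^ 2)⁻¹ • (G s - G 1) := by
      rw [hKdef]
      exact (intervalIntegral.integral_add_adjacent_intervals (hintK one_pos ha1)
        (hintK ha1 ht1)).symm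
    have hgint : IntervalIntegrable (fun s : ℝ => ε/4 * ((1 - s) ^ 2)⁻¹) volume a t :=
      (((contOn_invsq fun x hx => ne_of_lt hx).const_smul (ε/4)).mono
        (uIcc_subset_Iio ha1 ht1)).intervalIntegrable
    have hIb : ‖∫ s in a..t, ((1 - s) ^ 2)⁻¹ • (G s - G 1)‖ ≤ ε/4 * (1 - t)⁻¹ := by
      have hae : ∀ᵐ s ∂volume.restrict (Set.uIoc a t),
          ‖((1 - s) ^ 2)⁻¹ • (G s - G 1)‖ ≤ ε/4 * ((1 - s) ^ 2)⁻¹ := by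
        refine (ae_restrict_mem measurableSet_uIoc).mono fun s hs => ?_
        rw [uIoc_of_le (le_of_lt hat)] at hs
        have hs1 : s < 1 := lt_of_le_of_lt hs.2 ht1
        have hdist : dist s 1 < δ := by
          rw [Real.dist_eq, abs_of_nonpos (by linarith)]
          have : 1 - δ/2 < s := lt_of_le_of_lt haδ hs.1
          linarith
        have hGs : ‖G s - G 1‖ ≤ ε/4 := by
          have := hd hdist
          rw [dist_eq_norm] at this
          linarith
        rw [norm_smul, Real.norm_eq_abs, abs_of_nonneg (inv_nonneg.2 (sq_nonneg _)), mul_comm]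
        exact mul_le_mul_of_nonneg_right hGs (inv_nonneg.2 (sq_nonneg _))
      have := intervalIntegral.norm_integral_le_of_norm_le (le_of_lt hat)
        ((ae_restrict_iff' measurableSet_Ioc).1 (by rwa [uIoc_of_le (le_of_lt hat)] at hae)) hgint
      have hval : ∫ s in a..t, ε/4 * ((1 - s) ^ 2)⁻¹ = ε/4 * ((1 - t)⁻¹ - (1 - a)⁻¹) := by
        rw [intervalIntegral.integral_const_mul, integral_invsq ha1 ht1]
      rw [hval] at this
      have hmono : (1 - a)⁻¹ ≤ (1 - t)⁻¹ := by
        apply inv_anti₀ h1t (by linarith)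
      have habs : |ε/4 * ((1 - t)⁻¹ - (1 - a)⁻¹)| = ε/4 * ((1 - t)⁻¹ - (1 - a)⁻¹) := by
        apply abs_of_nonneg
        apply mul_nonneg (by linarith) (by linarith)
      have hpos : (0:ℝ) ≤ (1 - a)⁻¹ := le_of_lt (inv_pos.2 (by linarith : (0:ℝ) < 1 - a))
      nlinarith
    set I := ∫ s in a..t, ((1 - s) ^ 2)⁻¹ • (G s - G 1) with hIdef
    calc ‖(1 - t) • K t‖ = (1 - t) * ‖K t‖ := by
          rw [norm_smul, Real.norm_eq_abs, abs_of_pos h1t]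
      _ ≤ (1 - t) * (‖K a‖ + ‖I‖) := by
          apply mul_le_mul_of_nonneg_left _ (le_of_lt h1t)
          rw [hsplitK]; exact norm_add_le _ _
      _ = (1 - t) * ‖K a‖ + (1 - t) * ‖I‖ := by ring
      _ < ε/2 + ε/2 := by
          apply add_lt_add_of_lt_of_le hKlt
          have h2 : (1 - t) * ‖I‖ ≤ (1 - t) * (ε/4 * (1 - t)⁻¹) :=
            mul_le_mul_of_nonneg_left hIb (le_of_lt h1t)
          have h3 : (1 - t) * (ε/4 * (1 - t)⁻¹) = ε/4 := by
            field_simp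
          linarith
      _ = ε := by ring
  have hsum : Tendsto (fun t : ℝ => G 1 + ((1 - t) • (x₀ - G 1) + (1 - t) • K t))
      (𝓝[<] (1:ℝ)) (𝓝 (G 1)) := by
    have := (hA.add hB).const_add (G 1)
    simpa using this
  refine Tendsto.congr' ?_ hsum
  filter_upwards [self_mem_nhdsWithin] with t ht
  exact (key t ht).symm

/-- The deterministic bridge-type ODE: for `g : [0,1] → ℝ^d` continuous
and `x₀ ∈ ℝ^d`, the function `x(t) = x₀(1-t) + (1-t) ∫₀ᵗ g(s)/(1-s)² ds` satisfies
`x(0) = x₀`, is differentiable on `[0,1)` with `x'(t) = (g(t) - x(t))/(1-t)`, and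
`x(t) → g(1)` as `t → 1⁻`. -/
theorem stmt_16 (d : ℕ) (g : ℝ → (Fin d → ℝ)) (x₀ : Fin d → ℝ)
    (hg : ContinuousOn g (Icc (0 : ℝ) 1))
    (x : ℝ → (Fin d → ℝ))
    (hx : x = fun t => (1 - t) • x₀ + (1 - t) • ∫ s in (0 : ℝ)..t, ((1 - s) ^ 2)⁻¹ • g s) :
    x 0 = x₀ ∧
    (∀ t ∈ Ico (0 : ℝ) 1,
      HasDerivWithinAt x ((1 - t)⁻¹ • (g t - x t)) (Ico (0 : ℝ) 1) t) ∧
    Tendsto x (nhdsWithin 1 (Iio (1 : ℝ))) (𝓝 (g 1)) := by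
  have hGc : Continuous (IccExtend (zero_le_one (α := ℝ)) fun s : Icc (0:ℝ) 1 => g s) :=
    (continuousOn_iff_continuous_restrict.1 hg).Icc_extend'
  set G : ℝ → Fin d → ℝ := IccExtend zero_le_one (fun s : Icc (0:ℝ) 1 => g s) with hGdef
  have hGg : ∀ s ∈ Icc (0:ℝ) 1, G s = g s := fun s hs => IccExtend_of_mem _ _ hs
  have hG1 : G 1 = g 1 := hGg 1 (by norm_num)
  have hxX : ∀ t ∈ Icc (0:ℝ) 1,
      x t = (1 - t) • x₀ + (1 - t) • ∫ s in (0:ℝ)..t, ((1 - s) ^ 2)⁻¹ • G s := by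
    intro t ht
    rw [hx]
    simp only
    congr 2
    apply intervalIntegral.integral_congr
    intro s hs
    rw [uIcc_of_le ht.1] at hs
    simp only
    rw [hGg s ⟨hs.1, hs.2.trans ht.2⟩]
  refine ⟨?_, ?_, ?_⟩
  · rw [hx]; simp
  · intro t ht
    have htI : t ∈ Icc (0:ℝ) 1 := ⟨ht.1, le_of_lt ht.2⟩
    have hd := (hasDerivAt_X hGc x₀ ht.2).hasDerivWithinAt (s := Ico (0:ℝ) 1)
    have heq : (1 - t)⁻¹ • (g t - x t) = (1 - t)⁻¹ •
        (G t - ((1 - t) • x₀ + (1 - t) • ∫ s in (0:ℝ)..t, ((1 - s) ^ 2)⁻¹ • G s)) := by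
      rw [hGg t htI, hxX t htI]
    rw [heq]
    exact hd.congr (fun y hy => hxX y ⟨hy.1, le_of_lt hy.2⟩) (hxX t htI)
  · have hT := tendsto_X hGc x₀
    rw [hG1] at hT
    refine Tendsto.congr' ?_ hT
    filter_upwards [Ioo_mem_nhdsLT_of_mem (show (1:ℝ) ∈ Ioc (0:ℝ) 1 from ⟨one_pos, le_refl 1⟩)]
      with t ht
    exact (hxX t ⟨le_of_lt ht.1, le_of_lt ht.2⟩).symm
end
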